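/- arXiv:1107.1289 — 12 statements merged into one kernel-verified Lean document; each statement's English description precedes it below -/
import Mathlib

section
/- Let f : ℝ≥0 → ℝ≥0 be a nondecreasing convex function, let X be a normed linear space, let p_1 > 0, p_j ≤ 0 for j = 2, ..., n, and suppose S := p_1 + ... + p_n > 0. Then for all x_1, ..., x_n ∈ X, f(‖∑_{j=1}^n p_j x_j‖ / S) ≥ (∑_{j=1}^n p_j f(‖x_j‖)) / S. -/
/-!
Solving for the only positive term, `p₁ x₁ = S y + ∑_{j ≥ 2} (-p_j) x_j` with
`y = (∑ p_j x_j) / S`, so `p₁ ‖x₁‖ ≤ S ‖y‖ + ∑_{j ≥ 2} (-p_j) ‖x_j‖`: the norm `‖x₁‖` is bounded by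
the barycentre of `‖y‖` and the `‖x_j‖` for the nonnegative weights `S, -p₂, …, -pₙ`, whose total
is `p₁`. Monotonicity of `f` and Jensen's inequality then give
`p₁ f ‖x₁‖ ≤ S f ‖y‖ + ∑_{j ≥ 2} (-p_j) f ‖x_j‖`, which is the claim.
-/

open Finset Function Set

theorem sum_mul_norm_le_norm_sum_smul {ι E : Type*} [Fintype ι] [SeminormedAddCommGroup E]
    [NormedSpace ℝ E] {p : ι → ℝ} {x : ι → E} {i₀ : ι} (hp₀ : 0 ≤ p i₀)
    (hp : ∀ j ≠ i₀, p j ≤ 0) : ∑ j, p j * ‖x j‖ ≤ ‖∑ j, p j • x j‖ := by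
  classical
  rw [Fintype.sum_eq_add_sum_compl i₀, Fintype.sum_eq_add_sum_compl i₀]
  have hrest : ‖∑ j ∈ {i₀}ᶜ, p j • x j‖ ≤ -∑ j ∈ {i₀}ᶜ, p j * ‖x j‖ := by
    rw [← sum_neg_distrib]
    refine (norm_sum_le _ _).trans (sum_le_sum fun j hj => ?_)
    rw [norm_smul, Real.norm_of_nonpos (hp j (by simpa using hj)), neg_mul]
  calc p i₀ * ‖x i₀‖ + ∑ j ∈ {i₀}ᶜ, p j * ‖x j‖
      ≤ ‖p i₀ • x i₀‖ - ‖∑ j ∈ {i₀}ᶜ, p j • x j‖ := by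
        rw [norm_smul, Real.norm_of_nonneg hp₀]; linarith
    _ ≤ ‖p i₀ • x i₀ + ∑ j ∈ {i₀}ᶜ, p j • x j‖ := by
        simpa using norm_sub_norm_le (p i₀ • x i₀) (-∑ j ∈ {i₀}ᶜ, p j • x j)

theorem sum_update_mul_update {ι : Type*} [Fintype ι] [DecidableEq ι] (w t : ι → ℝ) (i₀ : ι)
    (a s : ℝ) (g : ℝ → ℝ) :
    ∑ j, update w i₀ a j * g (update t i₀ s j)
      = a * g s + ∑ j, w j * g (t j) - w i₀ * g (t i₀) := by
  rw [Fintype.sum_eq_add_sum_compl i₀, Fintype.sum_eq_add_sum_compl i₀ (fun j => w j * g (t j))]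
  rw [sum_congr rfl fun j hj => by
    rw [update_of_ne (by simpa using hj), update_of_ne (by simpa using hj)]]
  simp only [update_self]
  ring

theorem ConvexOn.sum_mul_le_of_monotoneOn {ι : Type*} [Fintype ι] {f : ℝ → ℝ}
    (hconv : ConvexOn ℝ (Ici 0) f) (hmono : MonotoneOn f (Ici 0)) {p t : ι → ℝ} {s : ℝ}
    {i₀ : ι} (hp₀ : 0 < p i₀) (hp : ∀ j ≠ i₀, p j ≤ 0) (hS : 0 ≤ ∑ j, p j)
    (ht : ∀ j, 0 ≤ t j) (hs : 0 ≤ s) (hle : ∑ j, p j * t j ≤ (∑ j, p j) * s) :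
    ∑ j, p j * f (t j) ≤ (∑ j, p j) * f s := by
  classical
  set S := ∑ j, p j
  set w := update (-p) i₀ S
  set v := update t i₀ s
  have hw : ∀ j, 0 ≤ w j := by
    intro j
    rcases eq_or_ne j i₀ with rfl | hj
    · simpa [w] using hS
    · simpa [w, hj] using hp j hj
  have hv : ∀ j, 0 ≤ v j := by
    intro j
    rcases eq_or_ne j i₀ with rfl | hj
    · simpa [v] using hs
    · simpa [v, hj] using ht j
  have hwsum : ∑ j, w j = p i₀ := by
    simpa [S] using sum_update_mul_update (-p) t i₀ S s fun _ => 1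
  have hjensen := hconv.map_centerMass_le (t := univ) (fun j _ => hw j) (hwsum ▸ hp₀)
    (fun j _ => mem_Ici.2 (hv j))
  simp only [centerMass, hwsum, smul_eq_mul, comp_apply] at hjensen
  have hcenter := sum_update_mul_update (-p) t i₀ S s id
  have hvalues := sum_update_mul_update (-p) t i₀ S s f
  simp only [id, Pi.neg_apply, neg_mul, sum_neg_distrib, sub_neg_eq_add] at hcenter hvalues
  rw [hcenter, hvalues] at hjensen
  have hmass : t i₀ ≤ (p i₀)⁻¹ * (S * s + -∑ j, p j * t j + p i₀ * t i₀) := by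
    rw [le_inv_mul_iff₀ hp₀]; linarith
  have hbound := (hmono (ht i₀) (le_trans (ht i₀) hmass) hmass).trans hjensen
  rw [le_inv_mul_iff₀ hp₀] at hbound
  linarith

theorem rassias_pecaric_general {X : Type*} [NormedAddCommGroup X] [NormedSpace ℝ X]
    (f : ℝ → ℝ) (hconv : ConvexOn ℝ (Set.Ici 0) f)
    (hmono : MonotoneOn f (Set.Ici 0))
    (n : ℕ) (hn : 0 < n) (p : Fin n → ℝ) (hp1 : 0 < p ⟨0, hn⟩)
    (hpj : ∀ j : Fin n, j ≠ ⟨0, hn⟩ → p j ≤ 0)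
    (hS : 0 < ∑ j, p j) (x : Fin n → X) :
    (∑ j, p j * f ‖x j‖) / (∑ j, p j) ≤ f (‖∑ j, p j • x j‖ / (∑ j, p j)) := by
  rw [div_le_iff₀ hS, mul_comm]
  refine hconv.sum_mul_le_of_monotoneOn hmono hp1 hpj hS.le (fun j => norm_nonneg _)
    (div_nonneg (norm_nonneg _) hS.le) ?_
  rw [mul_div_cancel₀ _ hS.ne']
  exact sum_mul_norm_le_norm_sum_smul hp1.le hpj

theorem rassias_pecaric {X : Type*} [NormedAddCommGroup X] [NormedSpace ℝ X]
    (f : ℝ → ℝ) (hconv : ConvexOn ℝ (Set.Ici 0) f)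
    (hmono : MonotoneOn f (Set.Ici 0)) (hnonneg : ∀ x ∈ Set.Ici (0 : ℝ), 0 ≤ f x)
    (n : ℕ) (hn : 0 < n) (p : Fin n → ℝ) (hp1 : 0 < p ⟨0, hn⟩)
    (hpj : ∀ j : Fin n, j ≠ ⟨0, hn⟩ → p j ≤ 0)
    (hS : 0 < ∑ j, p j) (x : Fin n → X) :
    (∑ j, p j * f ‖x j‖) / (∑ j, p j) ≤ f (‖∑ j, p j • x j‖ / (∑ j, p j)) :=
  rassias_pecaric_general f hconv hmono n hn p hp1 hpj hS x
end

section
/- Let A, B be bounded linear operators on a complex Hilbert space and let p, q > 1 with 1/p + 1/q = 1 and q ≥ p. Then |A - B|^2 + |(p-1)A + B|^2 ≤ p|A|^2 + q|B|^2 in the operator order. -/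
/-!
With `q (p - 1) = p`, expanding both sides shows that
`p|A|² + q|B|² - |A - B|² - |(p - 1)A + B|² = (q - 2) |(p - 1)A + B|²`,
and `q ≥ 2` because `q⁻¹ ≤ p⁻¹` and `p⁻¹ + q⁻¹ = 1`.
-/

theorem star_mul_self_sub_eq_smul_star_mul_self {R : Type*} [Ring R] [StarRing R] [Algebra ℝ R]
    [StarModule ℝ R] (a b : R) {p q : ℝ} (hpq : (p - 1) * q = p) :
    p • (star a * a) + q • (star b * b) - star (a - b) * (a - b)
      - star ((p - 1) • a + b) * ((p - 1) • a + b)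
      = (q - 2) • (star ((p - 1) • a + b) * ((p - 1) • a + b)) := by
  simp only [star_sub, star_add, star_smul, star_trivial, mul_sub, sub_mul, mul_add, add_mul,
    smul_mul_assoc, mul_smul_comm, smul_smul, smul_add]
  linear_combination (norm := module)
    ((1 - p) * hpq) • (star a * a) - hpq • (star a * b + star b * a)

theorem Real.HolderConjugate.two_le_of_le {p q : ℝ} (h : p.HolderConjugate q) (hpq : p ≤ q) :
    2 ≤ q := by
  have hinv : q⁻¹ ≤ p⁻¹ := inv_anti₀ h.pos hpq
  have : q⁻¹ ≤ 2⁻¹ := by linarith [h.inv_add_inv_eq_one]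
  exact (inv_le_inv₀ h.symm.pos two_pos).1 this

open ContinuousLinearMap in
theorem hirzallah_general {H : Type*} [NormedAddCommGroup H] [InnerProductSpace ℂ H]
    [CompleteSpace H] (A B : H →L[ℂ] H) (p q : ℝ) (hp : 1 < p)
    (hpq : 1 / p + 1 / q = 1) (hqp : p ≤ q) :
    (p • (adjoint A * A) + q • (adjoint B * B)
      - adjoint (A - B) * (A - B)
      - adjoint ((p - 1) • A + B) * ((p - 1) • A + B)).IsPositive := by
  have hconj : p.HolderConjugate q := Real.holderConjugate_iff.2 ⟨hp, by simpa using hpq⟩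
  rw [← nonneg_iff_isPositive]
  simp only [← star_eq_adjoint]
  rw [star_mul_self_sub_eq_smul_star_mul_self A B hconj.sub_one_mul_conj]
  exact smul_nonneg (sub_nonneg.2 (hconj.two_le_of_le hqp)) (star_mul_self_nonneg _)

open ContinuousLinearMap in
theorem hirzallah {H : Type*} [NormedAddCommGroup H] [InnerProductSpace ℂ H]
    [CompleteSpace H] (A B : H →L[ℂ] H) (p q : ℝ) (hp : 1 < p) (hq : 1 < q)
    (hpq : 1 / p + 1 / q = 1) (hqp : p ≤ q) :
    (p • (adjoint A * A) + q • (adjoint B * B)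
      - adjoint (A - B) * (A - B)
      - adjoint ((p - 1) • A + B) * ((p - 1) • A + B)).IsPositive :=
  hirzallah_general A B p q hp hpq hqp
end

section
/- For all bounded linear operators A, B on a complex Hilbert space and conjugate exponents p, q > 0 with 1/p + 1/q = 1, the identity |A - B|^2 + |√(p/q) A + √(q/p) B|^2 = p|A|^2 + q|B|^2 holds. -/
/-! With `a = √(p/q)` and `b = √(q/p)` we have `a b = 1`, so the cross terms `A* B + B* A`
cancel when the two squares are expanded, leaving `(1 + a²) A* A + (1 + b²) B* B`;
for conjugate exponents `p / q = p - 1`, hence `1 + a² = p` and likewise `1 + b² = q`. -/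

theorem star_sub_mul_self_add_star_smul_add_smul_mul_self {R : Type*} [Ring R] [StarRing R]
    [Module ℝ R] [StarModule ℝ R] [IsScalarTower ℝ R R] [SMulCommClass ℝ R R]
    (x y : R) {a b : ℝ} (hab : a * b = 1) :
    star (x - y) * (x - y) + star (a • x + b • y) * (a • x + b • y)
      = (1 + a ^ 2) • (star x * x) + (1 + b ^ 2) • (star y * y) := by
  simp only [star_sub, star_add, star_smul, star_trivial, sub_mul, mul_sub, add_mul, mul_add,
    smul_mul_assoc, mul_smul_comm]
  match_scalars
  · ring
  · linear_combination hab
  · linear_combination hab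
  · ring

theorem Real.HolderConjugate.one_add_sqrt_div_sq {p q : ℝ} (h : p.HolderConjugate q) :
    1 + √(p / q) ^ 2 = p := by
  rw [Real.sq_sqrt (div_pos h.pos h.symm.pos).le, h.div_conj_eq_sub_one]
  ring

theorem Real.sqrt_div_mul_sqrt_div {p q : ℝ} (hp : 0 < p) (hq : 0 < q) :
    √(p / q) * √(q / p) = 1 := by
  rw [← Real.sqrt_mul (div_pos hp hq).le, div_mul_div_cancel₀ hq.ne', div_self hp.ne', Real.sqrt_one]

open ContinuousLinearMap in
theorem zhang_identity {H : Type*} [NormedAddCommGroup H] [InnerProductSpace ℂ H]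
    [CompleteSpace H] (A B : H →L[ℂ] H) (p q : ℝ) (hp : 0 < p) (hq : 0 < q)
    (hpq : 1 / p + 1 / q = 1) :
    adjoint (A - B) * (A - B)
      + adjoint (Real.sqrt (p / q) • A + Real.sqrt (q / p) • B)
          * (Real.sqrt (p / q) • A + Real.sqrt (q / p) • B)
    = p • (adjoint A * A) + q • (adjoint B * B) := by
  have hconj : p.HolderConjugate q := ⟨by simpa using hpq, hp, hq⟩
  simp only [← star_eq_adjoint]
  rw [star_sub_mul_self_add_star_smul_add_smul_mul_self A B (Real.sqrt_div_mul_sqrt_div hp hq),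
    hconj.one_add_sqrt_div_sq, hconj.symm.one_add_sqrt_div_sq]
end

section
/- Let a = (a_1,...,a_n), b = (b_1,...,b_n), c = (c_1,...,c_n) be real vectors such that the n×n matrix D(c) - Λ(a) - Λ(b) is positive semidefinite, where Λ(x) is the rank-one matrix (x_i x_j) and D(c) = diag(c_1,...,c_n). Then for all bounded linear operators A_1,...,A_n on a Hilbert space, |∑_{i=1}^n a_i A_i|^2 + |∑_{i=1}^n b_i A_i|^2 ≤ ∑_{i=1}^n c_i |A_i|^2. -/
/-!
With `M = D(c) - Λ(a) - Λ(b)`, the operator in question is `∑ i j, M i j • (A i)⋆ * A j`.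
A positive semidefinite matrix is a sum of rank-one matrices `v vᴴ`, and for `v vᴴ` this sum is
`X⋆ X` with `X = ∑ i, star (v i) • A i`; so the whole sum is positive. Only the star-ordered
algebra structure of the bounded operators is used.
-/

open Matrix
open scoped ComplexOrder

section WeightedGram

variable {𝕜 R ι : Type*} [RCLike 𝕜] [NonUnitalRing R] [StarRing R] [Module 𝕜 R] [Fintype ι]

def weightedGram (M : Matrix ι ι 𝕜) (A : ι → R) : R :=
  ∑ i, ∑ j, M i j • (star (A i) * A j)

theorem weightedGram_sub (M N : Matrix ι ι 𝕜) (A : ι → R) :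
    weightedGram (M - N) A = weightedGram M A - weightedGram N A := by
  simp only [weightedGram, Matrix.sub_apply, sub_smul, Finset.sum_sub_distrib]

theorem weightedGram_sum {κ : Type*} (s : Finset κ) (M : κ → Matrix ι ι 𝕜) (A : ι → R) :
    weightedGram (∑ k ∈ s, M k) A = ∑ k ∈ s, weightedGram (M k) A := by
  simp only [weightedGram, Matrix.sum_apply, Finset.sum_smul]
  exact (Finset.sum_congr rfl fun _ _ => Finset.sum_comm).trans Finset.sum_comm

theorem weightedGram_diagonal [DecidableEq ι] (c : ι → 𝕜) (A : ι → R) :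
    weightedGram (diagonal c) A = ∑ i, c i • (star (A i) * A i) := by
  simp only [weightedGram, diagonal_apply, ite_smul, zero_smul, Finset.sum_ite_eq,
    Finset.mem_univ, if_true]

variable [StarModule 𝕜 R] [IsScalarTower 𝕜 R R] [SMulCommClass 𝕜 R R]

theorem weightedGram_vecMulVec_star (v : ι → 𝕜) (A : ι → R) :
    weightedGram (vecMulVec (star v) v) A = star (∑ i, v i • A i) * ∑ j, v j • A j := by
  simp only [weightedGram, star_sum, star_smul, Finset.sum_mul, Finset.mul_sum,
    smul_mul_smul_comm, vecMulVec_apply, Pi.star_apply]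
  exact Finset.sum_comm

theorem weightedGram_nonneg [PartialOrder R] [StarOrderedRing R]
    {M : Matrix ι ι 𝕜} (hM : M.PosSemidef) (A : ι → R) : 0 ≤ weightedGram M A := by
  obtain ⟨m, v, rfl⟩ := posSemidef_iff_eq_sum_vecMulVec.mp hM
  rw [weightedGram_sum]
  refine Finset.sum_nonneg fun k _ => ?_
  have hrank_one := weightedGram_vecMulVec_star (star (v k)) A
  rw [star_star] at hrank_one
  exact hrank_one ▸ star_mul_self_nonneg _

end WeightedGram

open ContinuousLinearMap in
theorem matrix_order_bohr {H : Type*} [NormedAddCommGroup H] [InnerProductSpace ℂ H]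
    [CompleteSpace H] (n : ℕ) (a b c : Fin n → ℝ)
    (h : (Matrix.diagonal c - Matrix.vecMulVec a a - Matrix.vecMulVec b b).PosSemidef)
    (A : Fin n → (H →L[ℂ] H)) :
    ((∑ i, c i • (adjoint (A i) * A i))
      - adjoint (∑ i, a i • A i) * (∑ i, a i • A i)
      - adjoint (∑ i, b i • A i) * (∑ i, b i • A i)).IsPositive := by
  have hself (v : Fin n → ℝ) : vecMulVec v v = vecMulVec (star v) v := by rw [star_trivial]
  have hgram := weightedGram_nonneg h A
  rw [weightedGram_sub, weightedGram_sub, weightedGram_diagonal, hself a, hself b,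
    weightedGram_vecMulVec_star, weightedGram_vecMulVec_star] at hgram
  simpa only [nonneg_iff_isPositive, star_eq_adjoint] using hgram
end

section
/- Let A, B be bounded linear operators on a Hilbert space and let t ≥ 1 or t < 0. Then |A - B|^2 + |tA + B|^2 ≥ (1+t)|A|^2 + (1 + 1/t)|B|^2 in the operator order. -/
/-!
Expanding both squares, the left side minus the right side collapses to the single term
`((t - 1) / t) |tA + B|^2`, and `(t - 1) / t ≥ 0` exactly when `t ≥ 1` or `t < 0`.
-/

theorem star_sub_mul_add_star_smul_add_mul_sub_eq {R : Type*} [Ring R] [StarRing R] [Module ℝ R]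
    [StarModule ℝ R] [SMulCommClass ℝ R R] [IsScalarTower ℝ R R] (a b : R) {t : ℝ}
    (ht : t ≠ 0) :
    star (a - b) * (a - b) + star (t • a + b) * (t • a + b)
      - (1 + t) • (star a * a) - (1 + 1 / t) • (star b * b)
      = ((t - 1) / t) • (star (t • a + b) * (t • a + b)) := by
  simp only [star_sub, star_add, star_smul, star_trivial, sub_mul, mul_sub, add_mul, mul_add,
    smul_mul_assoc, mul_smul_comm]
  match_scalars <;> field_simp <;> ring

theorem sub_one_div_self_nonneg_of_one_le_or_neg {t : ℝ} (ht : 1 ≤ t ∨ t < 0) :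
    0 ≤ (t - 1) / t := by
  rcases ht with h | h
  · exact div_nonneg (by linarith) (by linarith)
  · exact div_nonneg_of_nonpos (by linarith) h.le

theorem ContinuousLinearMap.IsPositive.real_smul_of_nonneg {E : Type*} [NormedAddCommGroup E]
    [InnerProductSpace ℂ E] {T : E →L[ℂ] E} (hT : T.IsPositive) {c : ℝ} (hc : 0 ≤ c) :
    (c • T).IsPositive := by
  rw [RCLike.real_smul_eq_coe_smul (K := ℂ)]
  exact hT.smul_of_nonneg (RCLike.ofReal_nonneg.mpr hc)

open ContinuousLinearMap in
theorem bohr_large_t {H : Type*} [NormedAddCommGroup H] [InnerProductSpace ℂ H]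
    [CompleteSpace H] (A B : H →L[ℂ] H) (t : ℝ) (ht : 1 ≤ t ∨ t < 0) :
    (adjoint (A - B) * (A - B) + adjoint (t • A + B) * (t • A + B)
      - (1 + t) • (adjoint A * A) - (1 + 1 / t) • (adjoint B * B)).IsPositive := by
  have ht0 : t ≠ 0 := by rcases ht with h | h <;> linarith
  simp only [← star_eq_adjoint]
  rw [star_sub_mul_add_star_smul_add_mul_sub_eq A B ht0, star_eq_adjoint]
  exact (isPositive_adjoint_comp_self (t • A + B)).real_smul_of_nonneg
    (sub_one_div_self_nonneg_of_one_le_or_neg ht)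
end

section
/- Let A_1, ..., A_n be bounded linear operators on a Hilbert space and r_1, ..., r_n ≥ 1 with ∑_{i=1}^n 1/r_i = 1. Then |∑_{i=1}^n A_i|^2 ≤ ∑_{i=1}^n r_i |A_i|^2 in the operator order. -/
/-!
Test the operator inequality on a vector `x`: both sides are real quadratic forms, namely
`‖∑ i, A i x‖ ^ 2` and `∑ i, r i * ‖A i x‖ ^ 2`. The triangle inequality followed by
Cauchy–Schwarz in Sedrakyan's form, with the weights `1 / r i` summing to `1`, compares them.
-/

open scoped InnerProductSpace

theorem Finset.sq_sum_le_sum_mul_sq {ι R : Type*} [Field R] [LinearOrder R]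
    [IsStrictOrderedRing R] (s : Finset ι) (a : ι → R) {r : ι → R}
    (hr : ∀ i ∈ s, 0 < r i) (hsum : ∑ i ∈ s, 1 / r i = 1) :
    (∑ i ∈ s, a i) ^ 2 ≤ ∑ i ∈ s, r i * a i ^ 2 := by
  have h := sq_sum_div_le_sum_sq_div s a fun i hi => one_div_pos.mpr (hr i hi)
  simpa only [hsum, div_one, div_div_eq_mul_div, mul_comm] using h

theorem norm_sum_sq_le_sum_mul_norm_sq {ι E : Type*} [SeminormedAddCommGroup E]
    (s : Finset ι) (v : ι → E) {r : ι → ℝ}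
    (hr : ∀ i ∈ s, 0 < r i) (hsum : ∑ i ∈ s, 1 / r i = 1) :
    ‖∑ i ∈ s, v i‖ ^ 2 ≤ ∑ i ∈ s, r i * ‖v i‖ ^ 2 :=
  (pow_le_pow_left₀ (norm_nonneg _) (norm_sum_le s v) 2).trans
    (s.sq_sum_le_sum_mul_sq _ hr hsum)

namespace ContinuousLinearMap

theorem isPositive_of_inner_self_eq_ofReal {E : Type*} [NormedAddCommGroup E]
    [InnerProductSpace ℂ E] {T : E →L[ℂ] E} (f : E → ℝ) (hT : ∀ x, ⟪T x, x⟫_ℂ = f x)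
    (hf : ∀ x, 0 ≤ f x) : T.IsPositive :=
  (isPositive_iff_complex T).2 fun x => by simpa [hT x] using hf x

theorem inner_adjoint_mul_self_apply {𝕜 E : Type*} [RCLike 𝕜] [NormedAddCommGroup E]
    [InnerProductSpace 𝕜 E] [CompleteSpace E] (A : E →L[𝕜] E) (x : E) :
    ⟪(adjoint A * A) x, x⟫_𝕜 = (‖A x‖ : 𝕜) ^ 2 := by
  rw [mul_apply_eq_comp, adjoint_inner_left, inner_self_eq_norm_sq_to_K]

theorem inner_sum_smul_adjoint_mul_self_apply {ι E : Type*} [NormedAddCommGroup E]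
    [InnerProductSpace ℂ E] [CompleteSpace E] (s : Finset ι) (A : ι → E →L[ℂ] E) (r : ι → ℝ)
    (x : E) :
    ⟪(∑ i ∈ s, r i • (adjoint (A i) * A i)) x, x⟫_ℂ = ((∑ i ∈ s, r i * ‖A i x‖ ^ 2 : ℝ) : ℂ) := by
  simp only [_root_.sum_apply, sum_inner, smul_apply, ← Complex.coe_smul, inner_smul_left,
    inner_adjoint_mul_self_apply, Complex.conj_ofReal]
  push_cast
  rfl

end ContinuousLinearMap

open ContinuousLinearMap in
theorem multiple_bohr {H : Type*} [NormedAddCommGroup H] [InnerProductSpace ℂ H]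
    [CompleteSpace H] (n : ℕ) (A : Fin n → (H →L[ℂ] H)) (r : Fin n → ℝ)
    (hr : ∀ i, 1 ≤ r i) (hsum : ∑ i, 1 / r i = 1) :
    ((∑ i, r i • (adjoint (A i) * A i))
      - adjoint (∑ i, A i) * (∑ i, A i)).IsPositive := by
  refine isPositive_of_inner_self_eq_ofReal
    (fun x => ∑ i, r i * ‖A i x‖ ^ 2 - ‖∑ i, A i x‖ ^ 2) (fun x => ?_) (fun x => ?_)
  · rw [sub_apply, inner_sub_left, inner_sum_smul_adjoint_mul_self_apply,
      inner_adjoint_mul_self_apply, _root_.sum_apply]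
    push_cast
    rfl
  · exact sub_nonneg.2 <| norm_sum_sq_le_sum_mul_norm_sq _ _
      (fun i _ => one_pos.trans_le (hr i)) hsum
end

section
/- Let D = diag(r_1, ..., r_n) with r_i ≥ 1 and ∑_{i=1}^n 1/r_i = 1, and let C be the n×n matrix with all entries equal to 1. Then D - C is positive semidefinite. -/
/-! The quadratic form of `diagonal r` minus the all-ones matrix is `∑ rᵢ xᵢ² - (∑ xᵢ)²`,
nonnegative by Cauchy–Schwarz: `(∑ xᵢ)² ≤ (∑ 1/rᵢ) (∑ rᵢ xᵢ²)`. -/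

open Finset Matrix

section

variable {ι : Type*} [Fintype ι]

lemma dotProduct_diagonal_mulVec [DecidableEq ι] (r x : ι → ℝ) :
    star x ⬝ᵥ (diagonal r *ᵥ x) = ∑ i, r i * x i ^ 2 := by
  simp only [mulVec_diagonal, dotProduct, star_trivial]
  exact sum_congr rfl fun i _ => by ring

lemma dotProduct_allOnes_mulVec (x : ι → ℝ) :
    star x ⬝ᵥ ((of fun _ _ : ι => (1 : ℝ)) *ᵥ x) = (∑ i, x i) ^ 2 := by
  simp [dotProduct, mulVec, sq, sum_mul]

lemma sq_sum_le_sum_mul_sq_of_sum_inv_le_one {r : ι → ℝ} (hr : ∀ i, 0 < r i)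
    (hsum : ∑ i, 1 / r i ≤ 1) (x : ι → ℝ) :
    (∑ i, x i) ^ 2 ≤ ∑ i, r i * x i ^ 2 := by
  have hrx : ∀ i ∈ univ, 0 ≤ r i * x i ^ 2 := fun i _ => by have := hr i; positivity
  calc (∑ i, x i) ^ 2 ≤ (∑ i, 1 / r i) * ∑ i, r i * x i ^ 2 :=
        sum_sq_le_sum_mul_sum_of_sq_le_mul _ (fun i _ => (one_div_pos.2 (hr i)).le) hrx
          fun i _ => by rw [← mul_assoc, one_div_mul_cancel (hr i).ne', one_mul]
    _ ≤ ∑ i, r i * x i ^ 2 := mul_le_of_le_one_left (sum_nonneg hrx) hsum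

theorem posSemidef_diagonal_sub_allOnes [DecidableEq ι] {r : ι → ℝ} (hr : ∀ i, 0 < r i)
    (hsum : ∑ i, 1 / r i ≤ 1) :
    (diagonal r - of fun _ _ : ι => (1 : ℝ)).PosSemidef := by
  refine PosSemidef.of_dotProduct_mulVec_nonneg ?_ fun x => ?_
  · exact (isHermitian_diagonal_of_self_adjoint _ (IsSelfAdjoint.all _)).sub
      (by ext; simp [conjTranspose])
  · rw [sub_mulVec, dotProduct_sub, dotProduct_diagonal_mulVec, dotProduct_allOnes_mulVec,
      sub_nonneg]
    exact sq_sum_le_sum_mul_sq_of_sum_inv_le_one hr hsum x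

end

theorem diag_dominates_allones (n : ℕ) (r : Fin n → ℝ) (hr : ∀ i, 1 ≤ r i)
    (hsum : ∑ i, 1 / r i = 1) :
    (Matrix.diagonal r - Matrix.of fun _ _ : Fin n => (1 : ℝ)).PosSemidef :=
  posSemidef_diagonal_sub_allOnes (fun i => one_pos.trans_le (hr i)) hsum.le
end

section
/- Let a_1, a_2, b_1, b_2, p_1, p_2 be real numbers with p_1 ≥ a_1^2 + b_1^2, p_2 ≥ a_2^2 + b_2^2, and (p_1 - (a_1^2 + b_1^2))(p_2 - (a_2^2 + b_2^2)) ≥ (a_1 a_2 + b_1 b_2)^2. Then for all bounded linear operators A, B on a Hilbert space, |a_1 A + a_2 B|^2 + |b_1 A + b_2 B|^2 ≤ p_1 |A|^2 + p_2 |B|^2. -/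
/-!
Evaluated at a vector `x`, with `u = A x` and `v = B x`, the inequality reads
`‖a₁ u + a₂ v‖² + ‖b₁ u + b₂ v‖² ≤ p₁ ‖u‖² + p₂ ‖v‖²`. Expanding the squares, this is
`2 γ ⟪u, v⟫ ≤ α ‖u‖² + β ‖v‖²` with `α = p₁ - a₁² - b₁²`, `β = p₂ - a₂² - b₂²` and
`γ = a₁ a₂ + b₁ b₂`, which follows from Cauchy–Schwarz and AM–GM:
`2 |γ| ‖u‖ ‖v‖ ≤ 2 √(α β) ‖u‖ ‖v‖ ≤ α ‖u‖² + β ‖v‖²`.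
-/

open scoped InnerProductSpace

theorem two_mul_mul_le_of_sq_le_mul {α β γ x y t : ℝ} (hα : 0 ≤ α) (hβ : 0 ≤ β)
    (hγ : γ ^ 2 ≤ α * β) (ht : |t| ≤ x * y) :
    2 * γ * t ≤ α * x ^ 2 + β * y ^ 2 := by
  have hsq : (2 * |γ| * (x * y)) ^ 2 ≤ (α * x ^ 2 + β * y ^ 2) ^ 2 := by
    nlinarith [sq_nonneg (α * x ^ 2 - β * y ^ 2), sq_abs γ,
      mul_le_mul_of_nonneg_right hγ (sq_nonneg (x * y))]
  calc 2 * γ * t ≤ 2 * |γ| * |t| := by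
        rw [mul_assoc, mul_assoc, ← abs_mul]
        exact mul_le_mul_of_nonneg_left (le_abs_self _) zero_le_two
    _ ≤ 2 * |γ| * (x * y) := by gcongr
    _ ≤ α * x ^ 2 + β * y ^ 2 := (abs_le_of_sq_le_sq' hsq (by positivity)).2

section RealInnerProductSpace

variable {F : Type*} [NormedAddCommGroup F] [InnerProductSpace ℝ F]

theorem norm_smul_add_smul_sq (c d : ℝ) (u v : F) :
    ‖c • u + d • v‖ ^ 2 = c ^ 2 * ‖u‖ ^ 2 + 2 * (c * d) * ⟪u, v⟫_ℝ + d ^ 2 * ‖v‖ ^ 2 := by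
  rw [norm_add_sq_real, norm_smul, norm_smul, real_inner_smul_left, real_inner_smul_right,
    mul_pow, mul_pow, Real.norm_eq_abs, Real.norm_eq_abs, sq_abs, sq_abs]
  ring

theorem norm_smul_add_smul_sq_add_le {a₁ a₂ b₁ b₂ p₁ p₂ : ℝ}
    (h1 : a₁ ^ 2 + b₁ ^ 2 ≤ p₁) (h2 : a₂ ^ 2 + b₂ ^ 2 ≤ p₂)
    (h3 : (a₁ * a₂ + b₁ * b₂) ^ 2 ≤ (p₁ - (a₁ ^ 2 + b₁ ^ 2)) * (p₂ - (a₂ ^ 2 + b₂ ^ 2)))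
    (u v : F) :
    ‖a₁ • u + a₂ • v‖ ^ 2 + ‖b₁ • u + b₂ • v‖ ^ 2 ≤ p₁ * ‖u‖ ^ 2 + p₂ * ‖v‖ ^ 2 := by
  have := two_mul_mul_le_of_sq_le_mul (sub_nonneg.2 h1) (sub_nonneg.2 h2) h3
    (abs_real_inner_le_norm u v)
  rw [norm_smul_add_smul_sq, norm_smul_add_smul_sq]
  linarith

end RealInnerProductSpace

open ContinuousLinearMap in
theorem two_operator_bohr {H : Type*} [NormedAddCommGroup H] [InnerProductSpace ℂ H]
    [CompleteSpace H] (a₁ a₂ b₁ b₂ p₁ p₂ : ℝ)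
    (h1 : a₁ ^ 2 + b₁ ^ 2 ≤ p₁) (h2 : a₂ ^ 2 + b₂ ^ 2 ≤ p₂)
    (h3 : (a₁ * a₂ + b₁ * b₂) ^ 2 ≤ (p₁ - (a₁ ^ 2 + b₁ ^ 2)) * (p₂ - (a₂ ^ 2 + b₂ ^ 2)))
    (A B : H →L[ℂ] H) :
    (p₁ • (adjoint A * A) + p₂ • (adjoint B * B)
      - adjoint (a₁ • A + a₂ • B) * (a₁ • A + a₂ • B)
      - adjoint (b₁ • A + b₂ • B) * (b₁ • A + b₂ • B)).IsPositive := by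
  -- `re ⟪·, ·⟫_ℂ` is the inner product of the underlying real space, which is linear in `p : ℝ`.
  let := InnerProductSpace.rclikeToReal ℂ H
  have inner_adjoint_mul_self (C : H →L[ℂ] H) (x : H) : ⟪(adjoint C * C) x, x⟫_ℝ = ‖C x‖ ^ 2 := by
    rw [real_inner_eq_re_inner ℂ, apply_norm_sq_eq_inner_adjoint_left]
    rfl
  have selfAdjoint (C : H →L[ℂ] H) : IsSelfAdjoint (adjoint C * C) := .star_mul_self C
  refine isPositive_def'.2 ⟨?_, fun x => ?_⟩
  · exact ((((IsSelfAdjoint.all p₁).smul (selfAdjoint A)).add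
      ((IsSelfAdjoint.all p₂).smul (selfAdjoint B))).sub (selfAdjoint _)).sub (selfAdjoint _)
  · rw [reApplyInnerSelf_apply, ← real_inner_eq_re_inner ℂ]
    simp only [sub_apply, add_apply, smul_apply, inner_sub_left, inner_add_left,
      real_inner_smul_left, inner_adjoint_mul_self]
    linarith [norm_smul_add_smul_sq_add_le h1 h2 h3 (A x) (B x)]
end

section
/- Let r > 1 and a_1, ..., a_n > 0. Then for all complex numbers z_1, ..., z_n, |∑_{i=1}^n z_i|^r ≤ (∑_{i=1}^n a_i^{1/(1-r)})^{r-1} · ∑_{i=1}^n a_i |z_i|^r. -/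
open Finset Real

theorem Real.rpow_sum_mul_le_rpow_sum_mul_sum_mul_rpow {ι : Type*} (s : Finset ι) {r : ℝ}
    (hr : 1 ≤ r) (w f : ι → ℝ) (hw : ∀ i, 0 ≤ w i) (hf : ∀ i, 0 ≤ f i) :
    (∑ i ∈ s, w i * f i) ^ r ≤ (∑ i ∈ s, w i) ^ (r - 1) * ∑ i ∈ s, w i * f i ^ r := by
  have hW : 0 ≤ ∑ i ∈ s, w i := sum_nonneg fun i _ ↦ hw i
  have hWf : 0 ≤ ∑ i ∈ s, w i * f i ^ r :=
    sum_nonneg fun i _ ↦ mul_nonneg (hw i) (rpow_nonneg (hf i) r)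
  have hr0 : r ≠ 0 := by positivity
  calc (∑ i ∈ s, w i * f i) ^ r
      ≤ ((∑ i ∈ s, w i) ^ (1 - r⁻¹) * (∑ i ∈ s, w i * f i ^ r) ^ r⁻¹) ^ r :=
        rpow_le_rpow (sum_nonneg fun i _ ↦ mul_nonneg (hw i) (hf i))
          (inner_le_weight_mul_Lp_of_nonneg s hr w f hw hf) (by positivity)
    _ = (∑ i ∈ s, w i) ^ (r - 1) * ∑ i ∈ s, w i * f i ^ r := by
        rw [mul_rpow (rpow_nonneg hW _) (rpow_nonneg hWf _), ← rpow_mul hW, ← rpow_mul hWf,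
          inv_mul_cancel₀ hr0, rpow_one, sub_mul, one_mul, inv_mul_cancel₀ hr0]

/-- The weights `w i = a i ^ (1 / (1 - r))` are chosen so that `w i ^ (1 - r) = a i`;
Hölder with weights `w` applied to `x i / w i` then gives the bound. -/
theorem Real.rpow_sum_le_sum_rpow_mul_sum_mul_rpow {ι : Type*} (s : Finset ι) {r : ℝ}
    (hr : 1 < r) (a x : ι → ℝ) (ha : ∀ i, 0 < a i) (hx : ∀ i, 0 ≤ x i) :
    (∑ i ∈ s, x i) ^ r
      ≤ (∑ i ∈ s, a i ^ (1 / (1 - r))) ^ (r - 1) * ∑ i ∈ s, a i * x i ^ r := by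
  set w : ι → ℝ := fun i ↦ a i ^ (1 / (1 - r))
  have hw : ∀ i, 0 < w i := fun i ↦ rpow_pos_of_pos (ha i) _
  have hwx : ∀ i, w i * (x i / w i) = x i := fun i ↦ mul_div_cancel₀ _ (hw i).ne'
  have hwxr : ∀ i, w i * (x i / w i) ^ r = a i * x i ^ r := fun i ↦ by
    have hwa : w i ^ (1 - r) = a i := by
      rw [← rpow_mul (ha i).le, one_div_mul_cancel (by linarith), rpow_one]
    rw [div_rpow (hx i) (hw i).le, mul_div_left_comm, ← rpow_one_sub' (hw i).le (by linarith),
      hwa, mul_comm]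
  have := rpow_sum_mul_le_rpow_sum_mul_sum_mul_rpow s hr.le w (fun i ↦ x i / w i)
    (fun i ↦ (hw i).le) (fun i ↦ div_nonneg (hx i) (hw i).le)
  simpa only [hwx, hwxr] using this

theorem vasic_keckic (r : ℝ) (hr : 1 < r) (n : ℕ) (a : Fin n → ℝ)
    (ha : ∀ i, 0 < a i) (z : Fin n → ℂ) :
    ‖∑ i, z i‖ ^ r
      ≤ (∑ i, a i ^ (1 / (1 - r))) ^ (r - 1) * ∑ i, a i * ‖z i‖ ^ r :=
  (rpow_le_rpow (norm_nonneg _) (norm_sum_le _ _) (by positivity)).trans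
    (rpow_sum_le_sum_rpow_mul_sum_mul_rpow _ hr a _ ha fun i ↦ norm_nonneg (z i))
end

section
/- Let 1 < r ≤ 2, a_1, ..., a_n > 0, let x_1, ..., x_n be vectors in a Hilbert space H satisfying ∑_{i=1}^n a_i^{1/(1-r)} ‖x_i‖^2 ≤ ∑_{i=1}^n a_i^{1/(1-r)}, and let A_1, ..., A_n be positive operators on H. Then (∑_{i=1}^n ⟨A_i x_i, x_i⟩)^r ≤ (∑_{i=1}^n a_i^{1/(1-r)})^{r-1} · ∑_{i=1}^n a_i ⟨A_i^r x_i, x_i⟩. -/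
/-!
Since `t ↦ t ^ r` lies above its tangent lines, the functional calculus gives
`r c^(r-1) ⟨A x, x⟩ - (r-1) c^r ‖x‖² ≤ ⟨A^r x, x⟩` for every `c ≥ 0`. With weights
`w i = a i ^ (1/(1-r))`, `W = ∑ w i` and `m = (∑ ⟨A i x i, x i⟩) / W`, the choice `c = m * w i`
makes `a i * c^(r-1) = m^(r-1)` independent of `i`; multiplying by `a i`, summing, and using the
constraint on `∑ w i ‖x i‖²` leaves `m^r W`, which is the left side divided by `W^(r-1)`.
-/

open Finset

namespace Real

theorem tangent_line_le_rpow {r c t : ℝ} (hr : 1 < r) (hc : 0 ≤ c) (ht : 0 ≤ t) :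
    r * c ^ (r - 1) * t - (r - 1) * c ^ r ≤ t ^ r := by
  have hr0 : r - 1 ≠ 0 := by linarith
  have hY := young_inequality_of_nonneg ht (rpow_nonneg hc (r - 1)) (.conjExponent hr)
  rw [← rpow_mul hc, conjExponent, mul_div_cancel₀ r hr0] at hY
  have := mul_le_mul_of_nonneg_left hY (by linarith : 0 ≤ r)
  field_simp at this
  linarith

theorem rpow_eq_rpow_sub_one_mul {x r : ℝ} (hx : 0 ≤ x) (hr : r ≠ 0) :
    x ^ r = x ^ (r - 1) * x := by
  rw [← rpow_add_one' hx (by simpa using hr), sub_add_cancel]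

theorem mul_rpow_one_div_one_sub_rpow_sub_one {a r : ℝ} (ha : 0 < a) (hr : r ≠ 1) :
    a * (a ^ (1 / (1 - r))) ^ (r - 1) = 1 := by
  have : 1 / (1 - r) * (r - 1) = -1 := by
    field_simp [sub_ne_zero.mpr hr.symm]
    ring
  rw [← rpow_mul ha.le, this, rpow_neg_one, mul_inv_cancel₀ ha.ne']

end Real

theorem tangent_line_le_cfc_rpow {A : Type*} [CStarAlgebra A] [PartialOrder A]
    [StarOrderedRing A] {r c : ℝ} (hr : 1 < r) (hc : 0 ≤ c) {a : A} (ha : 0 ≤ a) :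
    (r * c ^ (r - 1)) • a - algebraMap ℝ A ((r - 1) * c ^ r) ≤ cfc (fun t : ℝ => t ^ r) a := by
  rw [← cfc_const_mul_id _ a, ← cfc_const _ a,
    ← cfc_sub (fun t : ℝ => r * c ^ (r - 1) * t) (fun _ => (r - 1) * c ^ r)]
  refine cfc_mono (fun t ht => Real.tangent_line_le_rpow hr hc (spectrum_nonneg_of_nonneg ha ht))
    (by fun_prop) ?_
  exact fun t ht => (Real.continuousAt_rpow_const t r (.inr (by linarith))).continuousWithinAt

namespace ContinuousLinearMap

variable {𝕜 E : Type*} [RCLike 𝕜] [NormedAddCommGroup E] [InnerProductSpace 𝕜 E]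

theorem reApplyInnerSelf_mono {S T : E →L[𝕜] E} (h : S ≤ T) (x : E) :
    S.reApplyInnerSelf x ≤ T.reApplyInnerSelf x := by
  have := ((le_def S T).mp h).2 x
  simp only [reApplyInnerSelf_apply, sub_apply, inner_sub_left, map_sub] at this ⊢
  linarith

variable {H : Type*} [NormedAddCommGroup H] [InnerProductSpace ℂ H]

theorem reApplyInnerSelf_smul_sub_algebraMap (α β : ℝ) (T : H →L[ℂ] H) (x : H) :
    (α • T - algebraMap ℝ (H →L[ℂ] H) β).reApplyInnerSelf x
      = α * T.reApplyInnerSelf x - β * ‖x‖ ^ 2 := by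
  rw [reApplyInnerSelf_apply, reApplyInnerSelf_apply, sub_apply, smul_apply,
    Algebra.algebraMap_eq_smul_one, smul_apply, one_apply_eq_self, inner_sub_left,
    RCLike.real_smul_eq_coe_smul (K := ℂ) α, RCLike.real_smul_eq_coe_smul (K := ℂ) β,
    inner_smul_left, inner_smul_left, RCLike.conj_ofReal, RCLike.conj_ofReal, map_sub,
    RCLike.re_ofReal_mul, RCLike.re_ofReal_mul, ← inner_self_eq_norm_sq (𝕜 := ℂ)]

theorem IsPositive.tangent_line_le_reApplyInnerSelf_cfc_rpow [CompleteSpace H]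
    {T : H →L[ℂ] H} (hT : T.IsPositive) {r c : ℝ} (hr : 1 < r) (hc : 0 ≤ c) (x : H) :
    r * c ^ (r - 1) * T.reApplyInnerSelf x - (r - 1) * c ^ r * ‖x‖ ^ 2
      ≤ (cfc (fun t : ℝ => t ^ r) T).reApplyInnerSelf x := by
  rw [← reApplyInnerSelf_smul_sub_algebraMap]
  exact reApplyInnerSelf_mono
    (tangent_line_le_cfc_rpow hr hc ((nonneg_iff_isPositive T).mpr hT)) x

end ContinuousLinearMap

theorem sum_rpow_le_of_tangent_line {ι : Type*} [Fintype ι] {r : ℝ} (hr : 1 < r)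
    {a s p q : ι → ℝ} (ha : ∀ i, 0 < a i) (hs : ∀ i, 0 ≤ s i)
    (hq : ∑ i, a i ^ (1 / (1 - r)) * q i ≤ ∑ i, a i ^ (1 / (1 - r)))
    (htan : ∀ i, ∀ c, 0 ≤ c → r * c ^ (r - 1) * s i - (r - 1) * c ^ r * q i ≤ p i) :
    (∑ i, s i) ^ r ≤ (∑ i, a i ^ (1 / (1 - r))) ^ (r - 1) * ∑ i, a i * p i := by
  rcases isEmpty_or_nonempty ι with _ | _
  · simp [Real.zero_rpow (by linarith : r ≠ 0)]
  set w := fun i => a i ^ (1 / (1 - r))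
  set W := ∑ i, w i
  set S := ∑ i, s i
  have hw : ∀ i, 0 < w i := fun i => Real.rpow_pos_of_pos (ha i) _
  have hW : 0 < W := sum_pos (fun i _ => hw i) univ_nonempty
  set m := S / W
  have hm : 0 ≤ m := div_nonneg (sum_nonneg fun i _ => hs i) hW.le
  have hS : S = m * W := (div_mul_cancel₀ S hW.ne').symm
  have hr0 : r ≠ 0 := by linarith
  have hterm : ∀ i, r * m ^ (r - 1) * s i - (r - 1) * m ^ r * (w i * q i) ≤ a i * p i := by
    intro i
    have h := mul_le_mul_of_nonneg_left (htan i (m * w i) (mul_nonneg hm (hw i).le)) (ha i).le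
    have haw : a i * w i ^ (r - 1) = 1 :=
      Real.mul_rpow_one_div_one_sub_rpow_sub_one (ha i) (by linarith)
    rw [Real.mul_rpow hm (hw i).le, Real.mul_rpow hm (hw i).le,
      Real.rpow_eq_rpow_sub_one_mul (hw i).le hr0] at h
    linear_combination h - (r * m ^ (r - 1) * s i - (r - 1) * m ^ r * w i * q i) * haw
  calc S ^ r = W ^ (r - 1) * (r * m ^ (r - 1) * S - (r - 1) * m ^ r * W) := by
        rw [hS, Real.mul_rpow hm hW.le, Real.rpow_eq_rpow_sub_one_mul hW.le hr0,
          Real.rpow_eq_rpow_sub_one_mul hm hr0]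
        ring
    _ ≤ W ^ (r - 1) * (r * m ^ (r - 1) * S - (r - 1) * m ^ r * ∑ i, w i * q i) := by
        gcongr
    _ ≤ W ^ (r - 1) * ∑ i, a i * p i := by
        gcongr
        calc _ = ∑ i, (r * m ^ (r - 1) * s i - (r - 1) * m ^ r * (w i * q i)) := by
              rw [sum_sub_distrib, ← mul_sum, ← mul_sum]
          _ ≤ _ := sum_le_sum fun i _ => hterm i

theorem bohr_vector_states_general {H : Type*} [NormedAddCommGroup H] [InnerProductSpace ℂ H]
    [CompleteSpace H] (r : ℝ) (hr1 : 1 < r) (n : ℕ)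
    (a : Fin n → ℝ) (ha : ∀ i, 0 < a i) (x : Fin n → H)
    (hx : ∑ i, a i ^ (1 / (1 - r)) * ‖x i‖ ^ 2 ≤ ∑ i, a i ^ (1 / (1 - r)))
    (A : Fin n → (H →L[ℂ] H)) (hA : ∀ i, (A i).IsPositive) :
    (∑ i, (A i).reApplyInnerSelf (x i)) ^ r
      ≤ (∑ i, a i ^ (1 / (1 - r))) ^ (r - 1)
          * ∑ i, a i * (cfc (fun s : ℝ => s ^ r) (A i)).reApplyInnerSelf (x i) :=
  sum_rpow_le_of_tangent_line hr1 ha (fun i => (hA i).2 (x i)) hx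
    fun i _ hc => (hA i).tangent_line_le_reApplyInnerSelf_cfc_rpow hr1 hc (x i)

theorem bohr_vector_states {H : Type*} [NormedAddCommGroup H] [InnerProductSpace ℂ H]
    [CompleteSpace H] (r : ℝ) (hr1 : 1 < r) (hr2 : r ≤ 2) (n : ℕ)
    (a : Fin n → ℝ) (ha : ∀ i, 0 < a i) (x : Fin n → H)
    (hx : ∑ i, a i ^ (1 / (1 - r)) * ‖x i‖ ^ 2 ≤ ∑ i, a i ^ (1 / (1 - r)))
    (A : Fin n → (H →L[ℂ] H)) (hA : ∀ i, (A i).IsPositive) :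
    (∑ i, (A i).reApplyInnerSelf (x i)) ^ r
      ≤ (∑ i, a i ^ (1 / (1 - r))) ^ (r - 1)
          * ∑ i, a i * (cfc (fun s : ℝ => s ^ r) (A i)).reApplyInnerSelf (x i) :=
  bohr_vector_states_general r hr1 n a ha x hx A hA
end

section
/- Let f be a convex function on ℝ with f(0) ≤ 0 and f(uv) ≤ f(u)f(v) for all real u, v. Let A_1, ..., A_ℓ be n×n Hermitian matrices and X_1, ..., X_ℓ be n×n complex matrices with 0 < ∑_{i=1}^ℓ α_i X_i* X_i ≤ I_n, where α_i > 0. Then for 1 ≤ k ≤ n, ∑_{j=1}^k λ_j(f(∑_{i=1}^ℓ X_i* A_i X_i)) ≤ ∑_{j=1}^k λ_j(∑_{i=1}^ℓ α_i f(α_i^{-1}) X_i* f(A_i) X_i). -/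
/-!
Let `wᵢ` be an orthonormal eigenbasis of `S = ∑ Xⱼᴴ Aⱼ Xⱼ` with eigenvalues `gᵢ`. Expanding each
`Aⱼ` in its own eigenbasis writes `gᵢ = ⟪wᵢ, S wᵢ⟫` as a combination `∑ αⱼ qⱼₘ (αⱼ⁻¹ eⱼₘ)` of
eigenvalues `eⱼₘ` of the `Aⱼ`, with nonnegative weights of total mass `⟪wᵢ, ∑ αⱼ XⱼᴴXⱼ wᵢ⟫ ≤ 1`.
Jensen's inequality, with `f 0 ≤ 0` absorbing the missing mass, and submultiplicativity give
`f gᵢ ≤ ⟪wᵢ, R wᵢ⟫`. A sum of `k` eigenvalues of `f(S)` equals `∑ dᵢ f gᵢ` for weights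
`0 ≤ dᵢ ≤ 1` of total mass `k`, and a sum `∑ dᵢ ⟪wᵢ, R wᵢ⟫` with such weights is at most the sum
of the `k` largest eigenvalues of `R`: rewritten in an eigenbasis of `R` it is again a combination
of eigenvalues with weights in `[0, 1]` of total mass `k`.
-/

open Finset Matrix
open scoped InnerProductSpace

theorem ConvexOn.map_sum_le_of_sum_le_one {ι : Type*} {s : Set ℝ} {f : ℝ → ℝ}
    (hf : ConvexOn ℝ s f) (h0 : 0 ∈ s) (hf0 : f 0 ≤ 0) {t : Finset ι} {w p : ι → ℝ}
    (hw : ∀ i ∈ t, 0 ≤ w i) (hw1 : ∑ i ∈ t, w i ≤ 1) (hp : ∀ i ∈ t, p i ∈ s) :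
    f (∑ i ∈ t, w i * p i) ≤ ∑ i ∈ t, w i * f (p i) := by
  have h := hf.map_add_sum_le hw (sub_add_cancel 1 _) hp (sub_nonneg.2 hw1) h0
  simp only [smul_eq_mul, mul_zero, zero_add] at h
  nlinarith [mul_nonpos_of_nonneg_of_nonpos (sub_nonneg.2 hw1) hf0]

theorem ConvexOn.map_sum_sum_le {ι κ : Type*} [Fintype ι] [Fintype κ] {f : ℝ → ℝ}
    (hf : ConvexOn ℝ Set.univ f) (hf0 : f 0 ≤ 0) (hfmul : ∀ u v, f (u * v) ≤ f u * f v)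
    {α : ι → ℝ} (hα : ∀ i, 0 < α i) {q : ι → κ → ℝ} (hq : ∀ i m, 0 ≤ q i m)
    (hαq : ∑ i, α i * ∑ m, q i m ≤ 1) (e : ι → κ → ℝ) :
    f (∑ i, ∑ m, e i m * q i m) ≤ ∑ i, α i * f (α i)⁻¹ * ∑ m, f (e i m) * q i m := by
  have hw : ∀ p ∈ (univ : Finset (ι × κ)), 0 ≤ α p.1 * q p.1 p.2 :=
    fun p _ => mul_nonneg (hα p.1).le (hq p.1 p.2)
  have hw1 : ∑ p : ι × κ, α p.1 * q p.1 p.2 ≤ 1 := by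
    simpa only [Fintype.sum_prod_type, ← mul_sum] using hαq
  have hjensen := hf.map_sum_le_of_sum_le_one (Set.mem_univ 0) hf0 hw hw1
    (p := fun p => (α p.1)⁻¹ * e p.1 p.2) fun _ _ => Set.mem_univ _
  have hsubmul : ∑ p : ι × κ, α p.1 * q p.1 p.2 * f ((α p.1)⁻¹ * e p.1 p.2)
      ≤ ∑ p : ι × κ, α p.1 * q p.1 p.2 * (f (α p.1)⁻¹ * f (e p.1 p.2)) :=
    sum_le_sum fun p hp => mul_le_mul_of_nonneg_left (hfmul _ _) (hw p hp)
  calc f (∑ i, ∑ m, e i m * q i m)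
      = f (∑ p : ι × κ, α p.1 * q p.1 p.2 * ((α p.1)⁻¹ * e p.1 p.2)) := by
        rw [Fintype.sum_prod_type]
        congr 1
        refine sum_congr rfl fun i _ => sum_congr rfl fun m _ => ?_
        field_simp [(hα i).ne']
    _ ≤ _ := hjensen.trans hsubmul
    _ = ∑ i, α i * f (α i)⁻¹ * ∑ m, f (e i m) * q i m := by
        simp only [Fintype.sum_prod_type, mul_sum]
        refine sum_congr rfl fun i _ => sum_congr rfl fun m _ => by ring

theorem sum_mul_le_sum_filter_lt {n k : ℕ} {ν c : Fin n → ℝ} (hν : Antitone ν)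
    (hc0 : ∀ i, 0 ≤ c i) (hc1 : ∀ i, c i ≤ 1)
    (hc : ∑ i, c i = #(univ.filter fun j : Fin n => (j : ℕ) < k)) :
    ∑ i, c i * ν i ≤ ∑ j ∈ univ.filter (fun j : Fin n => (j : ℕ) < k), ν j := by
  obtain ⟨t, ht⟩ : ∃ t, ∀ i : Fin n, ((i : ℕ) < k → t ≤ ν i) ∧ (k ≤ i → ν i ≤ t) := by
    rcases n.eq_zero_or_pos with rfl | hn
    · exact ⟨0, fun i => i.elim0⟩
    refine ⟨ν ⟨min k (n - 1), by omega⟩, fun i => ⟨fun hi => hν ?_, fun hi => hν ?_⟩⟩ <;>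
      simp only [Fin.le_def] <;> omega
  have hterm : ∀ i, c i * (ν i - t) ≤ if (i : ℕ) < k then ν i - t else 0 := fun i => by
    split_ifs with hi
    · exact mul_le_of_le_one_left (sub_nonneg.2 ((ht i).1 hi)) (hc1 i)
    · exact mul_nonpos_of_nonneg_of_nonpos (hc0 i) (sub_nonpos.2 ((ht i).2 (not_lt.1 hi)))
  have h := sum_le_sum fun i (_ : i ∈ univ) => hterm i
  rw [← sum_filter, sum_sub_distrib, sum_const, nsmul_eq_mul, ← hc] at h
  simp only [mul_sub, sum_sub_distrib, ← sum_mul] at h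
  linarith

variable {𝕜 : Type*} [RCLike 𝕜]

section OrthonormalBasis

variable {E : Type*} [NormedAddCommGroup E] [InnerProductSpace 𝕜 E] {ι κ : Type*} [Fintype ι]
  [Fintype κ] (b : OrthonormalBasis ι 𝕜 E) (b' : OrthonormalBasis κ 𝕜 E)

theorem OrthonormalBasis.sum_mul_sq_norm_inner_le_one {s : Finset κ} {d : κ → ℝ}
    (hd1 : ∀ j ∈ s, d j ≤ 1) (i : ι) :
    ∑ j ∈ s, d j * ‖⟪b i, b' j⟫_𝕜‖ ^ 2 ≤ 1 :=
  calc ∑ j ∈ s, d j * ‖⟪b i, b' j⟫_𝕜‖ ^ 2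
      ≤ ∑ j, ‖⟪b i, b' j⟫_𝕜‖ ^ 2 :=
        (sum_le_sum fun j hj => mul_le_of_le_one_left (by positivity) (hd1 j hj)).trans
          (sum_le_sum_of_subset_of_nonneg (subset_univ s) fun _ _ _ => by positivity)
    _ = 1 := by rw [b'.sum_sq_norm_inner_left, b.orthonormal.1 i, one_pow]

theorem OrthonormalBasis.sum_sum_mul_sq_norm_inner (s : Finset κ) (d : κ → ℝ) :
    ∑ i, ∑ j ∈ s, d j * ‖⟪b i, b' j⟫_𝕜‖ ^ 2 = ∑ j ∈ s, d j := by
  rw [sum_comm]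
  refine sum_congr rfl fun j _ => ?_
  rw [← mul_sum, b.sum_sq_norm_inner_right, b'.orthonormal.1 j, one_pow, mul_one]

end OrthonormalBasis

section Hermitian

variable {n : Type*} [Fintype n] [DecidableEq n]

theorem Matrix.IsHermitian.re_dotProduct_cfc_mulVec {H : Matrix n n 𝕜} (hH : H.IsHermitian)
    (f : ℝ → ℝ) (x : n → 𝕜) :
    RCLike.re (star x ⬝ᵥ (cfc f H *ᵥ x)) =
      ∑ m, f (hH.eigenvalues m) * ‖⟪hH.eigenvectorBasis m, WithLp.toLp 2 x⟫_𝕜‖ ^ 2 := by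
  set U : Matrix n n 𝕜 := ↑hH.eigenvectorUnitary
  have hU : star x ᵥ* U = star (star U *ᵥ x) := by
    rw [star_mulVec, star_eq_conjTranspose, conjTranspose_conjTranspose]
  have hinner : ∀ m, ⟪hH.eigenvectorBasis m, WithLp.toLp 2 x⟫_𝕜 = (star U *ᵥ x) m := fun m => by
    rw [EuclideanSpace.inner_eq_star_dotProduct]
    simp [U, mulVec, dotProduct, mul_comm]
  rw [hH.cfc_eq, IsHermitian.cfc, Unitary.conjStarAlgAut_apply, ← mulVec_mulVec, ← mulVec_mulVec,
    dotProduct_mulVec, hU]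
  simp only [hinner, dotProduct, mulVec_diagonal, Function.comp_apply, map_sum]
  refine sum_congr rfl fun m _ => ?_
  rw [Pi.star_apply, mul_left_comm, RCLike.star_def, RCLike.conj_mul, ← RCLike.ofReal_pow,
    ← RCLike.ofReal_mul, RCLike.ofReal_re]

theorem Matrix.IsHermitian.sum_eigenvalues_cfc {S : Matrix n n 𝕜} (hS : S.IsHermitian)
    (f : ℝ → ℝ) (hL : (cfc f S).IsHermitian) (T : Finset n) :
    ∑ t ∈ T, hL.eigenvalues t = ∑ i, (∑ t ∈ T,
      ‖⟪hS.eigenvectorBasis i, hL.eigenvectorBasis t⟫_𝕜‖ ^ 2) * f (hS.eigenvalues i) := by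
  simp only [hL.eigenvalues_eq, hS.re_dotProduct_cfc_mulVec, WithLp.toLp_ofLp, sum_mul]
  rw [sum_comm]
  exact sum_congr rfl fun t _ => sum_congr rfl fun i _ => mul_comm _ _

theorem ConvexOn.map_re_dotProduct_sum_conjTranspose_mul_mul_le {ι : Type*} [Fintype ι]
    {f : ℝ → ℝ} (hf : ConvexOn ℝ Set.univ f) (hf0 : f 0 ≤ 0)
    (hfmul : ∀ u v, f (u * v) ≤ f u * f v) {A : ι → Matrix n n 𝕜} (hA : ∀ i, (A i).IsHermitian)
    (X : ι → Matrix n n 𝕜) {α : ι → ℝ} (hα : ∀ i, 0 < α i) {x : n → 𝕜}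
    (hx : RCLike.re (star x ⬝ᵥ ((∑ i, α i • ((X i)ᴴ * X i)) *ᵥ x)) ≤ 1) :
    f (RCLike.re (star x ⬝ᵥ ((∑ i, (X i)ᴴ * A i * X i) *ᵥ x))) ≤
      RCLike.re (star x ⬝ᵥ
        ((∑ i, (α i * f (α i)⁻¹) • ((X i)ᴴ * cfc f (A i) * X i)) *ᵥ x)) := by
  have hquad : ∀ i (g : ℝ → ℝ), RCLike.re (star x ⬝ᵥ (((X i)ᴴ * cfc g (A i) * X i) *ᵥ x))
      = ∑ m, g ((hA i).eigenvalues m) *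
          ‖⟪(hA i).eigenvectorBasis m, WithLp.toLp 2 (X i *ᵥ x)⟫_𝕜‖ ^ 2 := fun i g => by
    rw [← (hA i).re_dotProduct_cfc_mulVec]
    simp only [star_mulVec, dotProduct_mulVec, vecMul_vecMul]
  have hsum : ∀ M : ι → Matrix n n 𝕜, RCLike.re (star x ⬝ᵥ ((∑ i, M i) *ᵥ x))
      = ∑ i, RCLike.re (star x ⬝ᵥ (M i *ᵥ x)) := fun M => by
    simp only [sum_mulVec, dotProduct_sum, map_sum]
  -- the three quadratic forms are `hquad` with `g = id`, `g = 1` and `g = f`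
  have hS : ∀ i, (X i)ᴴ * A i * X i = (X i)ᴴ * cfc id (A i) * X i := fun i => by
    rw [cfc_id ℝ (A i) (hA i).isSelfAdjoint]
  have hP : ∀ i, (X i)ᴴ * X i = (X i)ᴴ * cfc (fun _ : ℝ => (1 : ℝ)) (A i) * X i := fun i => by
    rw [cfc_const_one ℝ (A i), Matrix.mul_one]
  simp only [hsum, smul_mulVec, dotProduct_smul, RCLike.smul_re, hS, hP, hquad, one_mul,
    id] at hx ⊢
  exact hf.map_sum_sum_le hf0 hfmul hα (fun _ _ => by positivity) hx _

end Hermitian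

theorem Matrix.IsHermitian.sum_mul_re_dotProduct_le {n k : ℕ} {H : Matrix (Fin n) (Fin n) 𝕜}
    (hH : H.IsHermitian) {σ : Equiv.Perm (Fin n)} (hσ : Antitone (hH.eigenvalues ∘ σ))
    {ι : Type*} [Fintype ι] (b : OrthonormalBasis ι 𝕜 (EuclideanSpace 𝕜 (Fin n))) {d : ι → ℝ}
    (hd0 : ∀ i, 0 ≤ d i) (hd1 : ∀ i, d i ≤ 1)
    (hd : ∑ i, d i = #(univ.filter fun j : Fin n => (j : ℕ) < k)) :
    ∑ i, d i * RCLike.re (star ⇑(b i) ⬝ᵥ (H *ᵥ ⇑(b i))) ≤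
      ∑ j ∈ univ.filter (fun j : Fin n => (j : ℕ) < k), hH.eigenvalues (σ j) := by
  set v := hH.eigenvectorBasis
  set c : Fin n → ℝ := fun m => ∑ i, d i * ‖⟪v m, b i⟫_𝕜‖ ^ 2
  have hc1 : ∀ m, c m ≤ 1 := fun m =>
    v.sum_mul_sq_norm_inner_le_one b (fun i _ => hd1 i) m
  have hc : ∑ m, c m = ∑ i, d i := v.sum_sum_mul_sq_norm_inner b univ d
  have hquad : ∀ i, RCLike.re (star ⇑(b i) ⬝ᵥ (H *ᵥ ⇑(b i)))
      = ∑ m, hH.eigenvalues m * ‖⟪v m, b i⟫_𝕜‖ ^ 2 := fun i => by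
    simpa [cfc_id ℝ H hH.isSelfAdjoint] using hH.re_dotProduct_cfc_mulVec id ⇑(b i)
  calc ∑ i, d i * RCLike.re (star ⇑(b i) ⬝ᵥ (H *ᵥ ⇑(b i)))
      = ∑ m, c m * hH.eigenvalues m := by
        simp only [hquad, c, mul_sum, sum_mul]
        rw [sum_comm]
        exact sum_congr rfl fun m _ => sum_congr rfl fun i _ => by ring
    _ = ∑ j, c (σ j) * hH.eigenvalues (σ j) :=
        (Equiv.sum_comp σ fun m => c m * hH.eigenvalues m).symm
    _ ≤ _ := sum_mul_le_sum_filter_lt hσ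
        (fun j => sum_nonneg fun i _ => mul_nonneg (hd0 i) (by positivity)) (fun j => hc1 _)
        (by rw [Equiv.sum_comp σ c, hc, hd])

open Matrix ComplexOrder in
theorem matharu_moslehian_aujla_general (n ℓ : ℕ) (f : ℝ → ℝ)
    (hconv : ConvexOn ℝ Set.univ f) (hf0 : f 0 ≤ 0)
    (hfmul : ∀ u v : ℝ, f (u * v) ≤ f u * f v)
    (A : Fin ℓ → Matrix (Fin n) (Fin n) ℂ) (hA : ∀ i, (A i).IsHermitian)
    (X : Fin ℓ → Matrix (Fin n) (Fin n) ℂ) (α : Fin ℓ → ℝ) (hα : ∀ i, 0 < α i)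
    (hle : ((1 : Matrix (Fin n) (Fin n) ℂ) - ∑ i, α i • ((X i)ᴴ * X i)).PosSemidef)
    (L R : Matrix (Fin n) (Fin n) ℂ)
    (hL : L = cfc f (∑ i, (X i)ᴴ * A i * X i))
    (hR : R = ∑ i, (α i * f (α i)⁻¹) • ((X i)ᴴ * cfc f (A i) * X i))
    (hLh : L.IsHermitian) (hRh : R.IsHermitian)
    (μ ν : Fin n → ℝ) (hνa : Antitone ν)
    (hμ : ∃ σ : Equiv.Perm (Fin n), μ = hLh.eigenvalues ∘ σ)
    (hν : ∃ σ : Equiv.Perm (Fin n), ν = hRh.eigenvalues ∘ σ)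
    (k : ℕ) :
    ∑ j ∈ Finset.univ.filter (fun j : Fin n => (j : ℕ) < k), μ j
      ≤ ∑ j ∈ Finset.univ.filter (fun j : Fin n => (j : ℕ) < k), ν j := by
  obtain ⟨σL, rfl⟩ := hμ
  obtain ⟨σR, rfl⟩ := hν
  subst hL
  set S := ∑ i, (X i)ᴴ * A i * X i
  have hS : S.IsHermitian :=
    isSelfAdjoint_sum _ fun i _ => isHermitian_conjTranspose_mul_mul (X i) (hA i)
  set w := hS.eigenvectorBasis
  set u := hLh.eigenvectorBasis
  set F := univ.filter fun j : Fin n => (j : ℕ) < k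
  set T := F.map σL.toEmbedding
  set d : Fin n → ℝ := fun i => ∑ t ∈ T, ‖⟪w i, u t⟫_ℂ‖ ^ 2
  have hd1 : ∀ i, d i ≤ 1 := fun i => by
    simpa using w.sum_mul_sq_norm_inner_le_one u (d := 1) (fun _ _ => le_rfl) i
  have hd : ∑ i, d i = #F := by
    simpa only [Pi.one_apply, one_mul, sum_const, T, card_map, nsmul_eq_mul, mul_one] using
      w.sum_sum_mul_sq_norm_inner u T 1
  have hjensen : ∀ i, f (hS.eigenvalues i) ≤ RCLike.re (star ⇑(w i) ⬝ᵥ (R *ᵥ ⇑(w i))) :=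
      fun i => by
    rw [hS.eigenvalues_eq, hR]
    refine hconv.map_re_dotProduct_sum_conjTranspose_mul_mul_le hf0 hfmul hA X hα ?_
    have hunit : RCLike.re (star ⇑(w i) ⬝ᵥ ⇑(w i)) = 1 := by
      rw [dotProduct_comm, ← EuclideanSpace.inner_eq_star_dotProduct, inner_self_eq_norm_sq_to_K,
        w.orthonormal.1 i]
      simp
    have := hle.re_dotProduct_nonneg (w i)
    rw [sub_mulVec, one_mulVec, dotProduct_sub, map_sub, hunit] at this
    linarith
  calc ∑ j ∈ F, hLh.eigenvalues (σL j) = ∑ t ∈ T, hLh.eigenvalues t :=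
        (sum_map F σL.toEmbedding _).symm
    _ = ∑ i, d i * f (hS.eigenvalues i) := hS.sum_eigenvalues_cfc f hLh T
    _ ≤ _ := sum_le_sum fun i _ => mul_le_mul_of_nonneg_left (hjensen i) (by positivity)
    _ ≤ _ := hRh.sum_mul_re_dotProduct_le hνa w (fun i => by positivity) hd1 hd

open Matrix ComplexOrder in
theorem matharu_moslehian_aujla (n ℓ : ℕ) (f : ℝ → ℝ)
    (hconv : ConvexOn ℝ Set.univ f) (hf0 : f 0 ≤ 0)
    (hfmul : ∀ u v : ℝ, f (u * v) ≤ f u * f v)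
    (A : Fin ℓ → Matrix (Fin n) (Fin n) ℂ) (hA : ∀ i, (A i).IsHermitian)
    (X : Fin ℓ → Matrix (Fin n) (Fin n) ℂ) (α : Fin ℓ → ℝ) (hα : ∀ i, 0 < α i)
    (hpos : (∑ i, α i • ((X i)ᴴ * X i)).PosDef)
    (hle : ((1 : Matrix (Fin n) (Fin n) ℂ) - ∑ i, α i • ((X i)ᴴ * X i)).PosSemidef)
    (L R : Matrix (Fin n) (Fin n) ℂ)
    (hL : L = cfc f (∑ i, (X i)ᴴ * A i * X i))
    (hR : R = ∑ i, (α i * f (α i)⁻¹) • ((X i)ᴴ * cfc f (A i) * X i))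
    (hLh : L.IsHermitian) (hRh : R.IsHermitian)
    (μ ν : Fin n → ℝ) (hμa : Antitone μ) (hνa : Antitone ν)
    (hμ : ∃ σ : Equiv.Perm (Fin n), μ = hLh.eigenvalues ∘ σ)
    (hν : ∃ σ : Equiv.Perm (Fin n), ν = hRh.eigenvalues ∘ σ)
    (k : ℕ) (hk1 : 1 ≤ k) (hkn : k ≤ n) :
    ∑ j ∈ Finset.univ.filter (fun j : Fin n => (j : ℕ) < k), μ j
      ≤ ∑ j ∈ Finset.univ.filter (fun j : Fin n => (j : ℕ) < k), ν j :=
  matharu_moslehian_aujla_general n ℓ f hconv hf0 hfmul A hA X α hα hle L R hL hR hLh hRh μ ν hνa hμ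
    hν k
end

section
/- Let r > 1, p_1, ..., p_ℓ > 0, let A_1, ..., A_ℓ be n×n Hermitian matrices and X_1, ..., X_ℓ be n×n complex matrices with 0 < ∑_{i=1}^ℓ p_i^{1/(1-r)} X_i* X_i ≤ (∑_{i=1}^ℓ p_i^{1/(1-r)}) I_n. Then for 1 ≤ k ≤ n, ∑_{j=1}^k λ_j(|∑_{i=1}^ℓ X_i* A_i X_i|^r) ≤ (∑_{i=1}^ℓ p_i^{1/(1-r)})^{r-1} ∑_{j=1}^k λ_j(∑_{i=1}^ℓ p_i X_i* |A_i|^r X_i). -/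
/-!
Let `u_q` be an orthonormal eigenbasis of `T = ∑ Xᵢᴴ Aᵢ Xᵢ`, with eigenvalues `e_q`, and let
`c = ∑ pᵢ ^ (1 / (1 - r))`. Expanding each `⟪Xᵢ u_q, Aᵢ Xᵢ u_q⟫` in an eigenbasis of `Aᵢ` and
applying the weighted Hölder inequality gives `|e_q| ^ r ≤ c ^ (r - 1) * ⟪u_q, R u_q⟫`, because the
hypothesis bounds `∑ pᵢ ^ (1 / (1 - r)) ‖Xᵢ u_q‖²` by `c`.

If `w_m` is an eigenbasis of `|T| ^ r`, the matrix `|⟪u_q, w_m⟫|²` is doubly stochastic, so a sum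
of `k` eigenvalues of `|T| ^ r` equals `∑ t_q |e_q| ^ r` with weights `t_q ∈ [0, 1]` of total
mass `k`. The same device, with an eigenbasis of `R` in place of `w_m`, bounds
`∑ t_q ⟪u_q, R u_q⟫` by the sum of the `k` largest eigenvalues of `R` (Ky Fan).
-/

open Matrix Finset
open scoped ComplexOrder

theorem abs_sum_mul_rpow_le {ι : Type*} (s : Finset ι) {r : ℝ} (hr : 1 < r) (a w p : ι → ℝ)
    (hw : ∀ i, 0 ≤ w i) (hp : ∀ i, 0 < p i) :
    |∑ i ∈ s, a i * w i| ^ r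
      ≤ (∑ i ∈ s, p i ^ (1 / (1 - r)) * w i) ^ (r - 1) * ∑ i ∈ s, p i * (|a i| ^ r * w i) := by
  have hr0 : 0 < r := by linarith
  set W : ι → ℝ := fun i => p i ^ (1 / (1 - r)) * w i
  set g : ι → ℝ := fun i => |a i| * p i ^ (1 / (r - 1))
  have hW : ∀ i, 0 ≤ W i := fun i => mul_nonneg (Real.rpow_nonneg (hp i).le _) (hw i)
  have hg : ∀ i, 0 ≤ g i := fun i => mul_nonneg (abs_nonneg _) (Real.rpow_nonneg (hp i).le _)
  have hWg : ∀ i, W i * g i = |a i| * w i := by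
    intro i
    have : p i ^ (1 / (1 - r)) * p i ^ (1 / (r - 1)) = 1 := by
      rw [← Real.rpow_add (hp i), show 1 / (1 - r) + 1 / (r - 1) = 0 by
        rw [show 1 - r = -(r - 1) by ring, div_neg, neg_add_cancel], Real.rpow_zero]
    linear_combination (|a i| * w i) * this
  have hWgr : ∀ i, W i * g i ^ r = p i * (|a i| ^ r * w i) := by
    intro i
    have hr1 : 1 - r ≠ 0 := by linarith
    have hr2 : r - 1 ≠ 0 := by linarith
    have : p i ^ (1 / (1 - r)) * (p i ^ (1 / (r - 1))) ^ r = p i := by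
      rw [← Real.rpow_mul (hp i).le, ← Real.rpow_add (hp i)]
      convert Real.rpow_one (p i) using 2
      field_simp
      ring
    simp only [W, g, Real.mul_rpow (abs_nonneg _) (Real.rpow_nonneg (hp i).le _)]
    linear_combination (|a i| ^ r * w i) * this
  have holder := Real.inner_le_weight_mul_Lp_of_nonneg s hr.le W g hW hg
  simp only [hWg, hWgr] at holder
  have hsum : |∑ i ∈ s, a i * w i| ≤ ∑ i ∈ s, |a i| * w i :=
    (abs_sum_le_sum_abs _ _).trans_eq
      (sum_congr rfl fun i _ => by rw [abs_mul, abs_of_nonneg (hw i)])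
  have hS : 0 ≤ ∑ i ∈ s, W i := sum_nonneg fun i _ => hW i
  have hP : 0 ≤ ∑ i ∈ s, p i * (|a i| ^ r * w i) :=
    sum_nonneg fun i _ => mul_nonneg (hp i).le (mul_nonneg (by positivity) (hw i))
  calc |∑ i ∈ s, a i * w i| ^ r
      ≤ ((∑ i ∈ s, W i) ^ (1 - r⁻¹) * (∑ i ∈ s, p i * (|a i| ^ r * w i)) ^ r⁻¹) ^ r := by
        gcongr
        exact hsum.trans holder
    _ = (∑ i ∈ s, W i) ^ (r - 1) * ∑ i ∈ s, p i * (|a i| ^ r * w i) := by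
        rw [Real.mul_rpow (by positivity) (by positivity), ← Real.rpow_mul hS,
          ← Real.rpow_mul hP, inv_mul_cancel₀ hr0.ne', Real.rpow_one]
        congr 2
        field_simp

theorem Finset.sum_mul_le_sum_of_sum_eq_card {ι : Type*} [Fintype ι] (K : Finset ι) (ν x : ι → ℝ)
    (β : ℝ) (hK : ∀ i ∈ K, β ≤ ν i) (hKc : ∀ i ∉ K, ν i ≤ β) (hx01 : ∀ i, x i ∈ Set.Icc 0 1)
    (hx : ∑ i, x i = #K) :
    ∑ i, ν i * x i ≤ ∑ i ∈ K, ν i := by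
  classical
  have key : ∀ i,
      ν i * x i ≤ (if i ∈ K then ν i else 0) + β * (x i - if i ∈ K then 1 else 0) := by
    intro i
    by_cases hi : i ∈ K
    · simp only [hi, if_true]
      nlinarith [hK i hi, (hx01 i).2]
    · simp only [hi, if_false]
      nlinarith [hKc i hi, (hx01 i).1]
  calc ∑ i, ν i * x i
      ≤ ∑ i, ((if i ∈ K then ν i else 0) + β * (x i - if i ∈ K then 1 else 0)) :=
        sum_le_sum fun i _ => key i
    _ = ∑ i ∈ K, ν i := by
        simp only [sum_add_distrib, ← mul_sum, sum_sub_distrib, sum_ite_mem, univ_inter, hx,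
          sum_const, nsmul_eq_mul, mul_one, sub_self, mul_zero, add_zero]

theorem Fin.sum_mul_le_sum_filter_lt_of_antitone {n k : ℕ} (hk1 : 1 ≤ k) (hkn : k ≤ n)
    {ν : Fin n → ℝ} (hν : Antitone ν) {x : Fin n → ℝ} (hx01 : ∀ i, x i ∈ Set.Icc 0 1)
    (hx : ∑ i, x i = k) :
    ∑ i, ν i * x i ≤ ∑ j ∈ univ.filter (fun j : Fin n => (j : ℕ) < k), ν j := by
  refine sum_mul_le_sum_of_sum_eq_card _ ν x (ν ⟨k - 1, by omega⟩) (fun i hi => hν ?_)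
    (fun i hi => hν ?_) hx01 ?_
  · simp only [mem_filter, mem_univ, true_and] at hi
    exact Fin.le_iff_val_le_val.mpr (show (i : ℕ) ≤ k - 1 by omega)
  · simp only [mem_filter, mem_univ, true_and, not_lt] at hi
    exact Fin.le_iff_val_le_val.mpr (show k - 1 ≤ (i : ℕ) by omega)
  · rw [hx, Fin.card_filter_val_lt, min_eq_right hkn]

theorem Matrix.star_dotProduct_conjTranspose_mul_mul_mulVec {𝕜 m n : Type*} [RCLike 𝕜]
    [Fintype m] [Fintype n] (X : Matrix m n 𝕜) (M : Matrix m m 𝕜) (u : n → 𝕜) :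
    star u ⬝ᵥ (Xᴴ * M * X) *ᵥ u = star (X *ᵥ u) ⬝ᵥ M *ᵥ (X *ᵥ u) := by
  rw [← mulVec_mulVec, ← mulVec_mulVec, dotProduct_mulVec, vecMul_conjTranspose, star_star]

def Matrix.normSqEntries {𝕜 m n : Type*} [RCLike 𝕜] (M : Matrix m n 𝕜) : Matrix m n ℝ :=
  of fun i j => ‖M i j‖ ^ 2

section

variable {𝕜 : Type*} [RCLike 𝕜] {n : Type*} [Fintype n] [DecidableEq n]

theorem Matrix.mulVec_mem_Icc_of_mem_doublyStochastic {M : Matrix n n ℝ}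
    (hM : M ∈ doublyStochastic ℝ n) {x : n → ℝ} (hx : ∀ j, x j ∈ Set.Icc 0 1) (i : n) :
    (M *ᵥ x) i ∈ Set.Icc 0 1 := by
  refine ⟨sum_nonneg fun j _ => mul_nonneg (nonneg_of_mem_doublyStochastic hM) (hx j).1, ?_⟩
  calc (M *ᵥ x) i = ∑ j, M i j * x j := rfl
    _ ≤ ∑ j, M i j :=
        sum_le_sum fun j _ => mul_le_of_le_one_right (nonneg_of_mem_doublyStochastic hM) (hx j).2
    _ = 1 := sum_row_of_mem_doublyStochastic hM i

theorem Matrix.sum_norm_sq_row_of_mem_unitaryGroup {M : Matrix n n 𝕜} (hM : M ∈ unitaryGroup n 𝕜)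
    (i : n) : ∑ j, ‖M i j‖ ^ 2 = 1 := by
  have h := congr_fun₂ (mem_unitaryGroup_iff.mp hM) i i
  simp only [mul_apply, star_apply, RCLike.star_def, RCLike.mul_conj, one_apply_eq] at h
  exact_mod_cast h

theorem Matrix.sum_norm_sq_col_of_mem_unitaryGroup {M : Matrix n n 𝕜} (hM : M ∈ unitaryGroup n 𝕜)
    (j : n) : ∑ i, ‖M i j‖ ^ 2 = 1 := by
  have h := congr_fun₂ (mem_unitaryGroup_iff'.mp hM) j j
  simp only [mul_apply, star_apply, RCLike.star_def, RCLike.conj_mul, one_apply_eq] at h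
  exact_mod_cast h

theorem Matrix.star_dotProduct_transpose_self_of_mem_unitaryGroup {V : Matrix n n 𝕜}
    (hV : V ∈ unitaryGroup n 𝕜) (j : n) : star (Vᵀ j) ⬝ᵥ Vᵀ j = 1 := by
  have h := congr_fun₂ (mem_unitaryGroup_iff'.mp hV) j j
  rwa [one_apply_eq] at h

theorem Matrix.normSqEntries_mem_doublyStochastic {M : Matrix n n 𝕜}
    (hM : M ∈ unitaryGroup n 𝕜) : normSqEntries M ∈ doublyStochastic ℝ n :=
  mem_doublyStochastic_iff_sum.mpr ⟨fun _ _ => sq_nonneg _,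
    sum_norm_sq_row_of_mem_unitaryGroup hM, sum_norm_sq_col_of_mem_unitaryGroup hM⟩

theorem Matrix.IsHermitian.re_star_dotProduct_cfc_mulVec {A : Matrix n n 𝕜} (hA : A.IsHermitian)
    (f : ℝ → ℝ) (v : n → 𝕜) :
    RCLike.re (star v ⬝ᵥ cfc f A *ᵥ v)
      = ∑ q, f (hA.eigenvalues q) * ‖(star (hA.eigenvectorUnitary : Matrix n n 𝕜) *ᵥ v) q‖ ^ 2 := by
  have hv : star v ᵥ* (hA.eigenvectorUnitary : Matrix n n 𝕜)
      = star (star (hA.eigenvectorUnitary : Matrix n n 𝕜) *ᵥ v) := by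
    rw [star_mulVec, star_eq_conjTranspose, conjTranspose_conjTranspose]
  rw [hA.cfc_eq, IsHermitian.cfc, Unitary.conjStarAlgAut_apply, ← mulVec_mulVec, ← mulVec_mulVec,
    dotProduct_mulVec, hv]
  simp only [dotProduct, mulVec_diagonal, Pi.star_apply, map_sum, Function.comp_apply]
  refine sum_congr rfl fun q _ => ?_
  rw [mul_left_comm, RCLike.star_def, RCLike.conj_mul, ← RCLike.ofReal_pow, ← RCLike.ofReal_mul,
    RCLike.ofReal_re]

theorem Matrix.IsHermitian.sum_mul_re_star_dotProduct_cfc_mulVec {A : Matrix n n 𝕜}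
    (hA : A.IsHermitian) (f : ℝ → ℝ) (V : Matrix n n 𝕜) (y : n → ℝ) :
    ∑ m, y m * RCLike.re (star (Vᵀ m) ⬝ᵥ cfc f A *ᵥ Vᵀ m)
      = ∑ q, f (hA.eigenvalues q)
          * (normSqEntries (star (hA.eigenvectorUnitary : Matrix n n 𝕜) * V) *ᵥ y) q := by
  have hcol : ∀ m q, (star (hA.eigenvectorUnitary : Matrix n n 𝕜) *ᵥ Vᵀ m) q
      = (star (hA.eigenvectorUnitary : Matrix n n 𝕜) * V) q m := fun _ _ => rfl
  simp_rw [hA.re_star_dotProduct_cfc_mulVec, hcol]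
  simp only [mul_sum, mulVec, dotProduct, normSqEntries, of_apply]
  rw [sum_comm]
  exact sum_congr rfl fun q _ => sum_congr rfl fun m _ => by ring

theorem Matrix.IsHermitian.exists_sum_eigenvalues_cfc_eq {T : Matrix n n 𝕜} (hT : T.IsHermitian)
    (f : ℝ → ℝ) (hL : (cfc f T).IsHermitian) (S : Finset n) :
    ∃ t : n → ℝ, (∀ q, t q ∈ Set.Icc 0 1) ∧ ∑ q, t q = #S ∧
      ∑ m ∈ S, hL.eigenvalues m = ∑ q, f (hT.eigenvalues q) * t q := by
  set W : Matrix n n 𝕜 := (hL.eigenvectorUnitary : Matrix n n 𝕜)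
  set D := normSqEntries (star (hT.eigenvectorUnitary : Matrix n n 𝕜) * W)
  have hD : D ∈ doublyStochastic ℝ n := normSqEntries_mem_doublyStochastic
    (mul_mem (Unitary.star_mem hT.eigenvectorUnitary.2) hL.eigenvectorUnitary.2)
  set y : n → ℝ := fun m => if m ∈ S then 1 else 0
  have hy : ∀ m, y m ∈ Set.Icc 0 1 := fun m => by by_cases hm : m ∈ S <;> simp [y, hm]
  refine ⟨D *ᵥ y, mulVec_mem_Icc_of_mem_doublyStochastic hD hy, ?_, ?_⟩
  · simp [sum_mulVec_of_mem_doublyStochastic hD, y]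
  · rw [← hT.sum_mul_re_star_dotProduct_cfc_mulVec f W y]
    simp only [y, ite_mul, one_mul, zero_mul, sum_ite_mem, univ_inter]
    exact sum_congr rfl fun m _ => hL.eigenvalues_eq m

theorem Matrix.PosSemidef.re_star_dotProduct_mulVec_le {S : Matrix n n 𝕜} {c : ℝ}
    (h : (c • (1 : Matrix n n 𝕜) - S).PosSemidef) {u : n → 𝕜} (hu : star u ⬝ᵥ u = 1) :
    RCLike.re (star u ⬝ᵥ S *ᵥ u) ≤ c := by
  have h0 := (RCLike.nonneg_iff.mp (h.dotProduct_mulVec_nonneg u)).1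
  rwa [sub_mulVec, dotProduct_sub, smul_mulVec, one_mulVec, dotProduct_smul, hu, map_sub,
    RCLike.smul_re, RCLike.one_re, mul_one, sub_nonneg] at h0

theorem abs_sum_re_star_dotProduct_mulVec_rpow_le {ι : Type*} [Fintype ι] {r : ℝ} (hr : 1 < r)
    (p : ι → ℝ) (hp : ∀ i, 0 < p i) {A : ι → Matrix n n 𝕜} (hA : ∀ i, (A i).IsHermitian)
    (w : ι → n → 𝕜) {c : ℝ}
    (hc : ∑ i, p i ^ (1 / (1 - r)) * RCLike.re (star (w i) ⬝ᵥ w i) ≤ c) :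
    |∑ i, RCLike.re (star (w i) ⬝ᵥ A i *ᵥ w i)| ^ r
      ≤ c ^ (r - 1)
        * ∑ i, p i * RCLike.re (star (w i) ⬝ᵥ cfc (fun t : ℝ => |t| ^ r) (A i) *ᵥ w i) := by
  set ω : ι × n → ℝ := fun iq =>
    ‖(star ((hA iq.1).eigenvectorUnitary : Matrix n n 𝕜) *ᵥ w iq.1) iq.2‖ ^ 2
  set α : ι × n → ℝ := fun iq => (hA iq.1).eigenvalues iq.2
  have hquad : ∀ (f : ℝ → ℝ) i, RCLike.re (star (w i) ⬝ᵥ cfc f (A i) *ᵥ w i)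
      = ∑ q, f (α (i, q)) * ω (i, q) := fun f i => (hA i).re_star_dotProduct_cfc_mulVec f (w i)
  have hT : ∑ i, RCLike.re (star (w i) ⬝ᵥ A i *ᵥ w i) = ∑ iq, α iq * ω iq := by
    rw [Fintype.sum_prod_type]
    refine sum_congr rfl fun i _ => ?_
    have h := hquad id i
    rwa [cfc_id ℝ (A i) (hA i).isSelfAdjoint] at h
  have hN : ∑ i, p i ^ (1 / (1 - r)) * RCLike.re (star (w i) ⬝ᵥ w i)
      = ∑ iq, p iq.1 ^ (1 / (1 - r)) * ω iq := by
    rw [Fintype.sum_prod_type]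
    refine sum_congr rfl fun i _ => ?_
    have h := hquad (fun _ => 1) i
    rw [cfc_const_one ℝ (A i) (hA i).isSelfAdjoint, one_mulVec] at h
    simp only [h, one_mul, mul_sum]
  have hR : ∑ i, p i * RCLike.re (star (w i) ⬝ᵥ cfc (fun t : ℝ => |t| ^ r) (A i) *ᵥ w i)
      = ∑ iq, p iq.1 * (|α iq| ^ r * ω iq) := by
    simp only [Fintype.sum_prod_type, hquad, mul_sum]
  have hω : ∀ iq, 0 ≤ ω iq := fun _ => sq_nonneg _
  rw [hT, hR]
  refine (abs_sum_mul_rpow_le univ hr α ω (fun iq => p iq.1) hω fun iq => hp iq.1).trans ?_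
  gcongr
  · exact sum_nonneg fun iq _ => mul_nonneg (hp iq.1).le (mul_nonneg (by positivity) (hω iq))
  · exact sum_nonneg fun iq _ => mul_nonneg (Real.rpow_nonneg (hp iq.1).le _) (hω iq)
  · exact hN ▸ hc

theorem abs_re_star_dotProduct_sum_mulVec_rpow_le {ι m : Type*} [Fintype ι] [Fintype m]
    {r : ℝ} (hr : 1 < r) (p : ι → ℝ) (hp : ∀ i, 0 < p i) {A : ι → Matrix n n 𝕜}
    (hA : ∀ i, (A i).IsHermitian) (X : ι → Matrix n m 𝕜) (u : m → 𝕜) {c : ℝ}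
    (hc : RCLike.re (star u ⬝ᵥ (∑ i, p i ^ (1 / (1 - r)) • ((X i)ᴴ * X i)) *ᵥ u) ≤ c) :
    |RCLike.re (star u ⬝ᵥ (∑ i, (X i)ᴴ * A i * X i) *ᵥ u)| ^ r
      ≤ c ^ (r - 1) * RCLike.re (star u ⬝ᵥ
          (∑ i, p i • ((X i)ᴴ * cfc (fun t : ℝ => |t| ^ r) (A i) * X i)) *ᵥ u) := by
  have hXX : ∀ i, star u ⬝ᵥ ((X i)ᴴ * X i) *ᵥ u = star (X i *ᵥ u) ⬝ᵥ X i *ᵥ u := fun i => by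
    simpa using star_dotProduct_conjTranspose_mul_mul_mulVec (X i) 1 u
  simp only [sum_mulVec, dotProduct_sum, smul_mulVec, dotProduct_smul, map_sum, RCLike.smul_re,
    star_dotProduct_conjTranspose_mul_mul_mulVec, hXX] at hc ⊢
  exact abs_sum_re_star_dotProduct_mulVec_rpow_le hr p hp hA (fun i => X i *ᵥ u) hc

end

theorem Matrix.IsHermitian.sum_mul_re_star_dotProduct_mulVec_le {𝕜 : Type*} [RCLike 𝕜]
    {n k : ℕ} {H : Matrix (Fin n) (Fin n) 𝕜} (hH : H.IsHermitian) {ν : Fin n → ℝ} (hν : Antitone ν)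
    {τ : Equiv.Perm (Fin n)} (hντ : ν = hH.eigenvalues ∘ τ) (hk1 : 1 ≤ k) (hkn : k ≤ n)
    {V : Matrix (Fin n) (Fin n) 𝕜} (hV : V ∈ unitaryGroup (Fin n) 𝕜) {t : Fin n → ℝ}
    (ht : ∀ m, t m ∈ Set.Icc 0 1) (hts : ∑ m, t m = k) :
    ∑ m, t m * RCLike.re (star (Vᵀ m) ⬝ᵥ H *ᵥ Vᵀ m)
      ≤ ∑ j ∈ univ.filter (fun j : Fin n => (j : ℕ) < k), ν j := by
  set D := normSqEntries (star (hH.eigenvectorUnitary : Matrix (Fin n) (Fin n) 𝕜) * V)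
  have hD : D ∈ doublyStochastic ℝ (Fin n) :=
    normSqEntries_mem_doublyStochastic (mul_mem (Unitary.star_mem hH.eigenvectorUnitary.2) hV)
  have h := hH.sum_mul_re_star_dotProduct_cfc_mulVec id V t
  rw [cfc_id ℝ H hH.isSelfAdjoint] at h
  rw [h, ← Equiv.sum_comp τ]
  subst hντ
  exact Fin.sum_mul_le_sum_filter_lt_of_antitone hk1 hkn hν
    (fun j => mulVec_mem_Icc_of_mem_doublyStochastic hD ht (τ j))
    (by rw [Equiv.sum_comp τ (D *ᵥ t), sum_mulVec_of_mem_doublyStochastic hD, hts])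

open Matrix ComplexOrder in
theorem eigenvalue_vasic_keckic_general (n ℓ : ℕ) (r : ℝ) (hr : 1 < r)
    (p : Fin ℓ → ℝ) (hp : ∀ i, 0 < p i)
    (A : Fin ℓ → Matrix (Fin n) (Fin n) ℂ) (hA : ∀ i, (A i).IsHermitian)
    (X : Fin ℓ → Matrix (Fin n) (Fin n) ℂ)
    (hle : ((∑ i, p i ^ (1 / (1 - r))) • (1 : Matrix (Fin n) (Fin n) ℂ)
        - ∑ i, p i ^ (1 / (1 - r)) • ((X i)ᴴ * X i)).PosSemidef)
    (L R : Matrix (Fin n) (Fin n) ℂ)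
    (hL : L = cfc (fun t : ℝ => |t| ^ r) (∑ i, (X i)ᴴ * A i * X i))
    (hR : R = ∑ i, p i • ((X i)ᴴ * cfc (fun t : ℝ => |t| ^ r) (A i) * X i))
    (hLh : L.IsHermitian) (hRh : R.IsHermitian)
    (μ ν : Fin n → ℝ) (hνa : Antitone ν)
    (hμ : ∃ σ : Equiv.Perm (Fin n), μ = hLh.eigenvalues ∘ σ)
    (hν : ∃ σ : Equiv.Perm (Fin n), ν = hRh.eigenvalues ∘ σ)
    (k : ℕ) (hk1 : 1 ≤ k) (hkn : k ≤ n) :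
    ∑ j ∈ Finset.univ.filter (fun j : Fin n => (j : ℕ) < k), μ j
      ≤ (∑ i, p i ^ (1 / (1 - r))) ^ (r - 1)
          * ∑ j ∈ Finset.univ.filter (fun j : Fin n => (j : ℕ) < k), ν j := by
  subst hL
  obtain ⟨σ, rfl⟩ := hμ
  obtain ⟨τ, hτ⟩ := hν
  set c := ∑ i, p i ^ (1 / (1 - r))
  have hT : (∑ i, (X i)ᴴ * A i * X i).IsHermitian :=
    isSelfAdjoint_sum _ fun i _ => isHermitian_conjTranspose_mul_mul _ (hA i)
  set U : Matrix (Fin n) (Fin n) ℂ := (hT.eigenvectorUnitary : Matrix (Fin n) (Fin n) ℂ)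
  have hpoint : ∀ q,
      |hT.eigenvalues q| ^ r ≤ c ^ (r - 1) * RCLike.re (star (Uᵀ q) ⬝ᵥ R *ᵥ Uᵀ q) := by
    intro q
    have hu := star_dotProduct_transpose_self_of_mem_unitaryGroup hT.eigenvectorUnitary.2 q
    rw [hT.eigenvalues_eq q, hR]
    exact abs_re_star_dotProduct_sum_mulVec_rpow_le hr p hp hA X _
      (hle.re_star_dotProduct_mulVec_le hu)
  obtain ⟨t, ht, hts, hsum⟩ := hT.exists_sum_eigenvalues_cfc_eq _ hLh
    ((univ.filter fun j : Fin n => (j : ℕ) < k).map σ.toEmbedding)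
  calc ∑ j ∈ univ.filter (fun j : Fin n => (j : ℕ) < k), (hLh.eigenvalues ∘ σ) j
      = ∑ q, |hT.eigenvalues q| ^ r * t q := by rw [← hsum, sum_map]; rfl
    _ ≤ ∑ q, c ^ (r - 1) * RCLike.re (star (Uᵀ q) ⬝ᵥ R *ᵥ Uᵀ q) * t q :=
        sum_le_sum fun q _ => mul_le_mul_of_nonneg_right (hpoint q) (ht q).1
    _ = c ^ (r - 1) * ∑ q, t q * RCLike.re (star (Uᵀ q) ⬝ᵥ R *ᵥ Uᵀ q) := by
        rw [mul_sum]
        exact sum_congr rfl fun q _ => by ring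
    _ ≤ c ^ (r - 1) * ∑ j ∈ univ.filter (fun j : Fin n => (j : ℕ) < k), ν j := by
        gcongr
        · exact Real.rpow_nonneg (sum_nonneg fun i _ => Real.rpow_nonneg (hp i).le _) _
        · refine hRh.sum_mul_re_star_dotProduct_mulVec_le hνa hτ hk1 hkn
            hT.eigenvectorUnitary.2 ht ?_
          rw [hts, card_map, Fin.card_filter_val_lt, min_eq_right hkn]

open Matrix ComplexOrder in
theorem eigenvalue_vasic_keckic (n ℓ : ℕ) (r : ℝ) (hr : 1 < r)
    (p : Fin ℓ → ℝ) (hp : ∀ i, 0 < p i)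
    (A : Fin ℓ → Matrix (Fin n) (Fin n) ℂ) (hA : ∀ i, (A i).IsHermitian)
    (X : Fin ℓ → Matrix (Fin n) (Fin n) ℂ)
    (hpos : (∑ i, p i ^ (1 / (1 - r)) • ((X i)ᴴ * X i)).PosDef)
    (hle : ((∑ i, p i ^ (1 / (1 - r))) • (1 : Matrix (Fin n) (Fin n) ℂ)
        - ∑ i, p i ^ (1 / (1 - r)) • ((X i)ᴴ * X i)).PosSemidef)
    (L R : Matrix (Fin n) (Fin n) ℂ)
    (hL : L = cfc (fun t : ℝ => |t| ^ r) (∑ i, (X i)ᴴ * A i * X i))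
    (hR : R = ∑ i, p i • ((X i)ᴴ * cfc (fun t : ℝ => |t| ^ r) (A i) * X i))
    (hLh : L.IsHermitian) (hRh : R.IsHermitian)
    (μ ν : Fin n → ℝ) (hμa : Antitone μ) (hνa : Antitone ν)
    (hμ : ∃ σ : Equiv.Perm (Fin n), μ = hLh.eigenvalues ∘ σ)
    (hν : ∃ σ : Equiv.Perm (Fin n), ν = hRh.eigenvalues ∘ σ)
    (k : ℕ) (hk1 : 1 ≤ k) (hkn : k ≤ n) :
    ∑ j ∈ Finset.univ.filter (fun j : Fin n => (j : ℕ) < k), μ j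
      ≤ (∑ i, p i ^ (1 / (1 - r))) ^ (r - 1)
          * ∑ j ∈ Finset.univ.filter (fun j : Fin n => (j : ℕ) < k), ν j :=
  eigenvalue_vasic_keckic_general n ℓ r hr p hp A hA X hle L R hL hR hLh hRh μ ν hνa hμ hν k hk1 hkn
end
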